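/- arXiv:1504.00103 — 7 statements merged into one kernel-verified Lean document; each statement's English description precedes it below -/
import Mathlib

section
/- Let N ⊆ M with Markov trace of modulus τ and Jones projection e₁, and let λ₁,…,λₙ ∈ M. Then the following are equivalent: (1) the matrix Q = (E_N(λᵢλⱼ*)) is a projection in Mₙ(N) with normalized trace τ⁻¹/n; (2) Σᵢ λᵢ* e₁ λᵢ = 1; (3) every x ∈ M satisfies x = Σᵢ E_N(xλᵢ*) λᵢ. -/
/-!
Everything goes through f = Σᵢ λᵢ* e₁ λᵢ. Since e₁ commutes with N, the Jones relation gives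
e₁ y f = e₁ Σᵢ E_N(y λᵢ*) λᵢ for y ∈ M. Hence f = 1 yields the expansion (3) after cancelling e₁
(x e₁ = 0 ⇒ x = 0), and conversely (3) makes f a right unit on the spanning set M e₁ M. The
expansion applied to λᵢ is Q² = Q, and tr f = τ Σᵢ tr Qᵢᵢ. For (1) ⇒ (2), the map
Φ(P) = Σ λᵢ* Pᵢₖ e₁ λₖ satisfies Φ(P) Φ(P') = Φ(P Q P'), so f³ = f² and tr f² = 1: then 1 - f² is
a projection of trace zero, and faithfulness forces f = 1.
-/

open Finset Matrix

theorem eq_one_of_forall_mul_eq_self {R A : Type*} [CommSemiring R] [Semiring A] [Algebra R A]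
    {S : Set A} (hS : Submodule.span R S = ⊤) {f : A} (h : ∀ z ∈ S, z * f = z) : f = 1 := by
  have h1 : (1 : A) ∈ Submodule.span R S := hS ▸ Submodule.mem_top
  simpa using Submodule.span_induction (p := fun z _ => z * f = z) h
    (zero_mul f) (fun x y _ _ hx hy => by rw [add_mul, hx, hy])
    (fun r x _ hx => by rw [smul_mul_assoc, hx]) h1

theorem Matrix.one_apply_mem {n α S : Type*} [DecidableEq n] [Zero α] [One α] [SetLike S α]
    [ZeroMemClass S α] [OneMemClass S α] (s : S) (i j : n) : (1 : Matrix n n α) i j ∈ s := by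
  rw [one_apply]
  split_ifs
  exacts [one_mem s, zero_mem s]

section StarRing

variable {A : Type*} [Ring A] [StarRing A]

theorem commute_of_mul_mul_eq_mul {e a : A} (he : IsStarProjection e)
    (hfaith : ∀ x : A, star x * x = 0 → x = 0)
    (ha : e * a * e = a * e) (hsa : e * star a * e = star a * e)
    (hsaa : e * (star a * a) * e = star a * a * e) : Commute e a := by
  have hee : e * e = e := he.isIdempotentElem
  have hse : star e = e := he.isSelfAdjoint
  refine (sub_eq_zero.mp (hfaith _ ?_) :)
  calc star (e * a - a * e) * (e * a - a * e)
      = star a * (e * e) * a - star a * (e * a * e) - (e * star a * e) * a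
          + e * (star a * a) * e := by
        simp only [star_sub, star_mul, hse]; noncomm_ring
    _ = 0 := by rw [hee, ha, hsa, hsaa]; noncomm_ring

theorem eq_one_of_mul_mul_self_eq_mul_self {R : Type*} [CommRing R] [Algebra R A]
    (tr : A →ₗ[R] R) (htrfaithful : ∀ x : A, tr (star x * x) = 0 → x = 0)
    {f : A} (hf : star f = f) (hf3 : f * (f * f) = f * f) (htr : tr (f * f) = tr 1) :
    f = 1 := by
  have hp : IsStarProjection (f * f) :=
    ⟨by rw [IsIdempotentElem, mul_assoc, hf3, hf3], by rw [IsSelfAdjoint, star_mul, hf]⟩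
  have hq := hp.one_sub
  have hq0 : 1 - f * f = 0 := htrfaithful _ <| by
    rw [hq.isSelfAdjoint.star_eq, hq.isIdempotentElem.eq, map_sub, htr, sub_self]
  have hff : f * f = 1 := (sub_eq_zero.mp hq0).symm
  calc f = f * (f * f) := by rw [hff, mul_one]
    _ = 1 := by rw [hf3, hff]

end StarRing

section Jones

variable {R A : Type*} [CommRing R] [Ring A] [StarRing A] [Algebra R A]
  {e : A} {E : A →ₗ[R] A} {ι : Type*} {l : ι → A}

def condExpGram (E : A →ₗ[R] A) (l : ι → A) : Matrix ι ι A :=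
  Matrix.of fun i j => E (l i * star (l j))

theorem condExpGram_conjTranspose (hENstar : ∀ x, E (star x) = star (E x)) :
    (condExpGram E l)ᴴ = condExpGram E l := by
  ext i j
  simp only [conjTranspose_apply, condExpGram, of_apply, ← hENstar, star_mul, star_star]

variable [StarRing R] [StarModule R A] {N M : StarSubalgebra R A}

theorem commute_jones_of_mem (he : IsStarProjection e)
    (hfaith : ∀ x : A, star x * x = 0 → x = 0) (hNM : N ≤ M)
    (hENfix : ∀ x ∈ N, E x = x) (hjones : ∀ x ∈ M, e * x * e = E x * e) {a : A} (ha : a ∈ N) :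
    Commute e a := by
  have hfix : ∀ x ∈ N, e * x * e = x * e := fun x hx => by rw [hjones x (hNM hx), hENfix x hx]
  exact commute_of_mul_mul_eq_mul he hfaith (hfix a ha) (hfix _ (star_mem ha))
    (hfix _ (mul_mem (star_mem ha) ha))

theorem condExpGram_mem (hENmem : ∀ x ∈ M, E x ∈ N) (hl : ∀ i, l i ∈ M) (i j : ι) :
    condExpGram E l i j ∈ N :=
  hENmem _ (mul_mem (hl i) (star_mem (hl j)))

variable [Fintype ι]

-- `jonesMap e l P = λ* (P ⊗ e) λ` for the column λ = (lᵢ)ᵢ.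
def jonesMap (e : A) (l : ι → A) (P : Matrix ι ι A) : A :=
  ∑ i, ∑ k, star (l i) * P i k * e * l k

theorem jones_mul_mul_jonesSum (hjones : ∀ x ∈ M, e * x * e = E x * e)
    (hENmem : ∀ x ∈ M, E x ∈ N) (hcomm : ∀ a ∈ N, Commute e a) (hl : ∀ i, l i ∈ M)
    {y : A} (hy : y ∈ M) :
    e * y * ∑ i, star (l i) * e * l i = e * ∑ i, E (y * star (l i)) * l i := by
  simp only [mul_sum]
  refine sum_congr rfl fun i _ => ?_
  have hyl : y * star (l i) ∈ M := mul_mem hy (star_mem (hl i))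
  calc e * y * (star (l i) * e * l i) = e * (y * star (l i)) * e * l i := by noncomm_ring
    _ = e * (E (y * star (l i)) * l i) := by
      rw [hjones _ hyl, ← (hcomm _ (hENmem _ hyl)).eq, mul_assoc]

theorem eq_sum_of_jonesSum_eq_one (hse : star e = e) (hsep : ∀ x ∈ M, x * e = 0 → x = 0)
    (hNM : N ≤ M) (hjones : ∀ x ∈ M, e * x * e = E x * e) (hENmem : ∀ x ∈ M, E x ∈ N)
    (hcomm : ∀ a ∈ N, Commute e a) (hl : ∀ i, l i ∈ M)
    (h : ∑ i, star (l i) * e * l i = 1) {x : A} (hx : x ∈ M) :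
    x = ∑ i, E (x * star (l i)) * l i := by
  set y := ∑ i, E (x * star (l i)) * l i
  have hy : y ∈ M :=
    sum_mem fun i _ => mul_mem (hNM (hENmem _ (mul_mem hx (star_mem (hl i))))) (hl i)
  have hexy : e * (x - y) = 0 := by
    rw [mul_sub, ← jones_mul_mul_jonesSum hjones hENmem hcomm hl hx, h, mul_one, sub_self]
  have hxye : star (x - y) * e = 0 := by rw [← hse, ← star_mul, hexy, star_zero]
  rw [← sub_eq_zero, ← star_eq_zero]
  exact hsep _ (star_mem (sub_mem hx hy)) hxye

theorem jonesSum_eq_one_of_forall_eq_sum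
    (hdense : Submodule.span R {z : A | ∃ x ∈ M, ∃ y ∈ M, z = x * e * y} = ⊤)
    (hjones : ∀ x ∈ M, e * x * e = E x * e) (hENmem : ∀ x ∈ M, E x ∈ N)
    (hcomm : ∀ a ∈ N, Commute e a) (hl : ∀ i, l i ∈ M)
    (h : ∀ x ∈ M, x = ∑ i, E (x * star (l i)) * l i) :
    ∑ i, star (l i) * e * l i = 1 := by
  refine eq_one_of_forall_mul_eq_self hdense ?_
  rintro _ ⟨x, -, y, hy, rfl⟩
  rw [mul_assoc x, mul_assoc x, jones_mul_mul_jonesSum hjones hENmem hcomm hl hy, ← h y hy]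

theorem condExpGram_mul_self (hENmem : ∀ x ∈ M, E x ∈ N)
    (hENleft : ∀ a ∈ N, ∀ x, E (a * x) = a * E x) (hl : ∀ i, l i ∈ M)
    (h : ∀ x ∈ M, x = ∑ i, E (x * star (l i)) * l i) :
    condExpGram E l * condExpGram E l = condExpGram E l := by
  ext i j
  simp only [mul_apply, condExpGram, of_apply]
  conv_rhs => rw [h (l i) (hl i), sum_mul, map_sum]
  refine sum_congr rfl fun k _ => ?_
  rw [mul_assoc, hENleft _ (hENmem _ (mul_mem (hl i) (star_mem (hl k))))]

theorem jonesMap_one [DecidableEq ι] : jonesMap e l 1 = ∑ i, star (l i) * e * l i := by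
  simp [jonesMap, one_apply]

theorem jonesMap_mul (hNM : N ≤ M) (hjones : ∀ x ∈ M, e * x * e = E x * e)
    (hENright : ∀ b ∈ N, ∀ x, E (x * b) = E x * b) (hl : ∀ i, l i ∈ M)
    (P P' : Matrix ι ι A) (hP' : ∀ i j, P' i j ∈ N) :
    jonesMap e l P * jonesMap e l P' = jonesMap e l (P * condExpGram E l * P') := by
  have hterm : ∀ i k j m, star (l i) * P i k * e * l k * (star (l j) * P' j m * e * l m) =
      star (l i) * (P i k * condExpGram E l k j * P' j m) * e * l m := by
    intro i k j m
    have hM : l k * star (l j) * P' j m ∈ M :=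
      mul_mem (mul_mem (hl k) (star_mem (hl j))) (hNM (hP' j m))
    calc _ = star (l i) * P i k * (e * (l k * star (l j) * P' j m) * e) * l m := by noncomm_ring
      _ = _ := by
        rw [hjones _ hM, hENright _ (hP' j m)]
        simp only [condExpGram, of_apply, mul_assoc]
  simp only [jonesMap, sum_mul, mul_sum, hterm, mul_apply]
  rw [sum_comm]
  conv_rhs => rw [sum_comm]
  exact sum_congr rfl fun m _ => sum_comm

theorem tr_jonesMap (hNM : N ≤ M) (hENright : ∀ b ∈ N, ∀ x, E (x * b) = E x * b)
    (hl : ∀ i, l i ∈ M) (tr : A →ₗ[R] R) (htrace : ∀ x y, tr (x * y) = tr (y * x))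
    (htrEN : ∀ x ∈ M, tr (E x) = tr x) {τ : R} (hmarkov : ∀ x ∈ M, tr (x * e) = τ * tr x)
    (P : Matrix ι ι A) (hP : ∀ i j, P i j ∈ N) :
    tr (jonesMap e l P) = τ * tr (condExpGram E l * P).trace := by
  have hterm : ∀ i k,
      tr (star (l i) * P i k * e * l k) = τ * tr (condExpGram E l k i * P i k) := by
    intro i k
    have hM : l k * star (l i) * P i k ∈ M :=
      mul_mem (mul_mem (hl k) (star_mem (hl i))) (hNM (hP i k))
    rw [htrace]
    simp only [← mul_assoc]
    rw [hmarkov _ hM, ← htrEN _ hM, hENright _ (hP i k)]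
    rfl
  simp only [jonesMap, map_sum, hterm, trace, diag_apply, mul_apply, mul_sum]
  exact sum_comm

theorem tr_jonesSum [DecidableEq ι] (hNM : N ≤ M)
    (hENright : ∀ b ∈ N, ∀ x, E (x * b) = E x * b)
    (hl : ∀ i, l i ∈ M) (tr : A →ₗ[R] R) (htrace : ∀ x y, tr (x * y) = tr (y * x))
    (htrEN : ∀ x ∈ M, tr (E x) = tr x) {τ : R} (hmarkov : ∀ x ∈ M, tr (x * e) = τ * tr x) :
    tr (∑ i, star (l i) * e * l i) = τ * tr (condExpGram E l).trace := by
  rw [← jonesMap_one, tr_jonesMap hNM hENright hl tr htrace htrEN hmarkov 1 (one_apply_mem N),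
    mul_one]

theorem jonesSum_eq_one_of_condExpGram [DecidableEq ι] (hse : star e = e) (hNM : N ≤ M)
    (hjones : ∀ x ∈ M, e * x * e = E x * e) (hENright : ∀ b ∈ N, ∀ x, E (x * b) = E x * b)
    (hl : ∀ i, l i ∈ M) (tr : A →ₗ[R] R) (htrace : ∀ x y, tr (x * y) = tr (y * x))
    (htrfaithful : ∀ x : A, tr (star x * x) = 0 → x = 0)
    (htrEN : ∀ x ∈ M, tr (E x) = tr x) {τ : R} (hmarkov : ∀ x ∈ M, tr (x * e) = τ * tr x)
    (hQN : ∀ i j, condExpGram E l i j ∈ N)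
    (hQQ : condExpGram E l * condExpGram E l = condExpGram E l)
    (htrQ : τ * tr (condExpGram E l).trace = tr 1) :
    ∑ i, star (l i) * e * l i = 1 := by
  set Q := condExpGram E l
  have hsq : (∑ i, star (l i) * e * l i) * ∑ i, star (l i) * e * l i = jonesMap e l Q := by
    rw [← jonesMap_one, jonesMap_mul hNM hjones hENright hl _ _ (one_apply_mem N), Matrix.one_mul,
      Matrix.mul_one]
  refine eq_one_of_mul_mul_self_eq_mul_self tr htrfaithful ?_ ?_ ?_
  · simp only [star_sum, star_mul, hse, star_star, mul_assoc]
  · rw [hsq, ← jonesMap_one, jonesMap_mul hNM hjones hENright hl _ _ hQN, Matrix.one_mul, hQQ]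
  · rw [hsq, tr_jonesMap hNM hENright hl tr htrace htrEN hmarkov Q hQN, hQQ, htrQ]

end Jones

-- `A` plays the role of the basic construction M₁ = ⟨M, e₁⟩, spanned by M e₁ M.
theorem stmt1_general {A : Type*} [Ring A] [StarRing A] [Algebra ℂ A] [StarModule ℂ A]
    (N M : StarSubalgebra ℂ A) (hNM : N ≤ M)
    (e₁ : A) (heproj : e₁ * e₁ = e₁) (hestar : star e₁ = e₁)
    (τ : ℝ) (hτ : 0 < τ)
    (EN : A →ₗ[ℂ] A)
    (hENmem : ∀ x ∈ M, EN x ∈ N) (hENfix : ∀ x ∈ N, EN x = x)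
    (hENbim : ∀ a ∈ N, ∀ b ∈ N, ∀ x : A, EN (a * x * b) = a * EN x * b)
    (hENstar : ∀ x : A, EN (star x) = star (EN x))
    (hjones : ∀ x ∈ M, e₁ * x * e₁ = EN x * e₁)
    (hsep : ∀ x ∈ M, x * e₁ = 0 → x = 0)
    (tr : A →ₗ[ℂ] ℂ) (htr1 : tr 1 = 1)
    (htrace : ∀ x y : A, tr (x * y) = tr (y * x))
    (htrfaithful : ∀ x : A, tr (star x * x) = 0 → x = 0)
    (htrEN : ∀ x ∈ M, tr (EN x) = tr x)
    (hmarkov : ∀ x ∈ M, tr (x * e₁) = (τ : ℂ) * tr x)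
    (hdense : Submodule.span ℂ {z : A | ∃ x ∈ M, ∃ y ∈ M, z = x * e₁ * y} = ⊤)
    (n : ℕ) (hn : 0 < n) (l : Fin n → A) (hl : ∀ i, l i ∈ M) :
    List.TFAE
      [ -- (1) Q is a projection in Mₙ(N) of normalized trace τ⁻¹/n
        (let Q : Matrix (Fin n) (Fin n) A := Matrix.of fun i j => EN (l i * star (l j));
          (∀ i j, Q i j ∈ N) ∧ Q * Q = Q ∧ Q.conjTranspose = Q ∧
            ((n : ℂ))⁻¹ * ∑ i, tr (Q i i) = (τ : ℂ)⁻¹ / (n : ℂ)),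
        -- (2) Σᵢ λᵢ* e₁ λᵢ = 1
        (∑ i, star (l i) * e₁ * l i = 1),
        -- (3) every x ∈ M satisfies x = Σᵢ E_N(x λᵢ*) λᵢ
        (∀ x ∈ M, x = ∑ i, EN (x * star (l i)) * l i) ] := by
  have hfaith : ∀ x : A, star x * x = 0 → x = 0 :=
    fun x hx => htrfaithful x (by rw [hx, map_zero])
  have hcomm : ∀ a ∈ N, Commute e₁ a :=
    fun a => commute_jones_of_mem ⟨heproj, hestar⟩ hfaith hNM hENfix hjones
  have hENleft : ∀ a ∈ N, ∀ x, EN (a * x) = a * EN x := fun a ha x => by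
    simpa using hENbim a ha 1 N.one_mem x
  have hENright : ∀ b ∈ N, ∀ x, EN (x * b) = EN x * b := fun b hb x => by
    simpa using hENbim 1 N.one_mem b hb x
  have hnormalized : ((n : ℂ))⁻¹ * ∑ i, tr (condExpGram EN l i i) = (τ : ℂ)⁻¹ / n ↔
      (τ : ℂ) * tr (condExpGram EN l).trace = tr 1 := by
    have hn0 : (n : ℂ) ≠ 0 := by exact_mod_cast hn.ne'
    have hτ0 : (τ : ℂ) ≠ 0 := by exact_mod_cast hτ.ne'
    rw [trace, map_sum, htr1]
    field_simp
    rw [mul_comm]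
    rfl
  have h23 : ∑ i, star (l i) * e₁ * l i = 1 → ∀ x ∈ M, x = ∑ i, EN (x * star (l i)) * l i :=
    fun h2 x hx => eq_sum_of_jonesSum_eq_one hestar hsep hNM hjones hENmem hcomm hl h2 hx
  tfae_have 2 → 3 := h23
  tfae_have 3 → 2 := jonesSum_eq_one_of_forall_eq_sum hdense hjones hENmem hcomm hl
  tfae_have 2 → 1 := fun h2 =>
    ⟨condExpGram_mem hENmem hl, condExpGram_mul_self hENmem hENleft hl (h23 h2),
      condExpGram_conjTranspose hENstar,
      hnormalized.2 (by rw [← tr_jonesSum hNM hENright hl tr htrace htrEN hmarkov, h2])⟩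
  tfae_have 1 → 2 := fun ⟨hQN, hQQ, _, htrQ⟩ =>
    jonesSum_eq_one_of_condExpGram hestar hNM hjones hENright hl tr htrace htrfaithful htrEN
      hmarkov hQN hQQ (hnormalized.1 htrQ)
  tfae_finish

theorem stmt1 {A : Type*} [Ring A] [StarRing A] [Algebra ℂ A] [StarModule ℂ A]
    (N M : StarSubalgebra ℂ A) (hNM : N ≤ M)
    (e₁ : A) (heproj : e₁ * e₁ = e₁) (hestar : star e₁ = e₁)
    (τ : ℝ) (hτ : 0 < τ)
    (EN : A →ₗ[ℂ] A)
    (hENmem : ∀ x ∈ M, EN x ∈ N) (hENfix : ∀ x ∈ N, EN x = x)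
    (hENbim : ∀ a ∈ N, ∀ b ∈ N, ∀ x : A, EN (a * x * b) = a * EN x * b)
    (hENstar : ∀ x : A, EN (star x) = star (EN x))
    (hjones : ∀ x ∈ M, e₁ * x * e₁ = EN x * e₁)
    (hsep : ∀ x ∈ M, x * e₁ = 0 → x = 0)
    (tr : A →ₗ[ℂ] ℂ) (htr1 : tr 1 = 1)
    (htrace : ∀ x y : A, tr (x * y) = tr (y * x))
    (htrfaithful : ∀ x : A, tr (star x * x) = 0 → x = 0)
    (htrpos : ∀ x : A, 0 ≤ (tr (star x * x)).re ∧ (tr (star x * x)).im = 0)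
    (htrEN : ∀ x ∈ M, tr (EN x) = tr x)
    (hmarkov : ∀ x ∈ M, tr (x * e₁) = (τ : ℂ) * tr x)
    (hdense : Submodule.span ℂ {z : A | ∃ x ∈ M, ∃ y ∈ M, z = x * e₁ * y} = ⊤)
    (n : ℕ) (hn : 0 < n) (l : Fin n → A) (hl : ∀ i, l i ∈ M) :
    List.TFAE
      [ -- (1) Q is a projection in Mₙ(N) of normalized trace τ⁻¹/n
        (let Q : Matrix (Fin n) (Fin n) A := Matrix.of fun i j => EN (l i * star (l j));
          (∀ i j, Q i j ∈ N) ∧ Q * Q = Q ∧ Q.conjTranspose = Q ∧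
            ((n : ℂ))⁻¹ * ∑ i, tr (Q i i) = (τ : ℂ)⁻¹ / (n : ℂ)),
        -- (2) Σᵢ λᵢ* e₁ λᵢ = 1
        (∑ i, star (l i) * e₁ * l i = 1),
        -- (3) every x ∈ M satisfies x = Σᵢ E_N(x λᵢ*) λᵢ
        (∀ x ∈ M, x = ∑ i, EN (x * star (l i)) * l i) ] :=
  stmt1_general N M hNM e₁ heproj hestar τ hτ EN hENmem hENfix hENbim hENstar hjones hsep tr htr1
    htrace htrfaithful htrEN hmarkov hdense n hn l hl
end

section
/- Let N ⊆ M ⊆ P be a tower where both inclusions admit bases. If {λᵢ : 1 ≤ i ≤ m} is a basis for M/N and {μⱼ : 1 ≤ j ≤ n} is a basis for P/M, then {λᵢμⱼ : 1 ≤ i ≤ m, 1 ≤ j ≤ n} is a basis for P/N. -/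
open Finset

def IsPimsnerPopaBasis {P ι : Type*} [NonUnitalSemiring P] [Star P] [Fintype ι]
    (E : P → P) (B : Set P) (b : ι → P) : Prop :=
  (∀ i, b i ∈ B) ∧ ∀ x ∈ B, x = ∑ i, E (x * star (b i)) * b i

section

variable {R P : Type*} [CommSemiring R] [StarRing R] [Semiring P] [StarRing P] [Algebra R P]
  [StarModule R P] {M : StarSubalgebra R P}

theorem map_mul_right_of_bimodule {E : P → P}
    (hE : ∀ a ∈ M, ∀ b ∈ M, ∀ x : P, E (a * x * b) = a * E x * b) (x : P) {b : P}
    (hb : b ∈ M) : E (x * b) = E x * b := by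
  simpa only [one_mul] using hE 1 M.one_mem b hb x

/-- Expand `x` over `μ` with coefficients `E_M(x μⱼ*) ∈ M`, then expand each coefficient over
`λ`; right `M`-modularity of `E_M` and `E_N ∘ E_M = E_N` identify the new coefficients
`E_N(E_M(x μⱼ*) λᵢ*)` with `E_N(x (λᵢ μⱼ)*)`. -/
theorem IsPimsnerPopaBasis.mul {ι κ : Type*} [Fintype ι] [Fintype κ] {EN EM : P → P}
    {l : ι → P} {μ : κ → P} (hl : IsPimsnerPopaBasis EN M l)
    (hμ : IsPimsnerPopaBasis EM Set.univ μ) (hEM_mem : ∀ x, EM x ∈ M)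
    (hEM_mul : ∀ x, ∀ b ∈ M, EM (x * b) = EM x * b) (hcomp : ∀ x, EN (EM x) = EN x) :
    IsPimsnerPopaBasis EN Set.univ (fun p : ι × κ => l p.1 * μ p.2) := by
  refine ⟨fun _ => Set.mem_univ _, fun x _ => ?_⟩
  have hcoeff : ∀ i j, EN (EM (x * star (μ j)) * star (l i)) = EN (x * star (l i * μ j)) :=
    fun i j => by
      rw [← hEM_mul _ _ (star_mem (hl.1 i)), hcomp, star_mul, mul_assoc]
  calc x = ∑ j, EM (x * star (μ j)) * μ j := hμ.2 x (Set.mem_univ x)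
    _ = ∑ j, (∑ i, EN (EM (x * star (μ j)) * star (l i)) * l i) * μ j := by
        simp only [← hl.2 _ (hEM_mem _)]
    _ = ∑ p : ι × κ, EN (x * star (l p.1 * μ p.2)) * (l p.1 * μ p.2) := by
        simp only [sum_mul, hcoeff, mul_assoc, Fintype.sum_prod_type]
        exact sum_comm

end

theorem stmt4_general {P : Type*} [Ring P] [StarRing P] [Algebra ℂ P] [StarModule ℂ P]
    (M : StarSubalgebra ℂ P)
    (EN : P →ₗ[ℂ] P) (EM : P →ₗ[ℂ] P)
    (hEMmem : ∀ x : P, EM x ∈ M)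
    (hEMbim : ∀ a ∈ M, ∀ b ∈ M, ∀ x : P, EM (a * x * b) = a * EM x * b)
    (hcomp : ∀ x : P, EN (EM x) = EN x)
    (m n : ℕ)
    (l : Fin m → P) (hl : ∀ i, l i ∈ M)
    (μ : Fin n → P)
    (hlbasis : ∀ x ∈ M, x = ∑ i, EN (x * star (l i)) * l i)
    (hμbasis : ∀ x : P, x = ∑ j, EM (x * star (μ j)) * μ j) :
    ∀ x : P, x = ∑ i : Fin m, ∑ j : Fin n,
      EN (x * star (l i * μ j)) * (l i * μ j) := by
  intro x
  have hlB : IsPimsnerPopaBasis EN M l := ⟨hl, hlbasis⟩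
  have hμB : IsPimsnerPopaBasis EM Set.univ μ := ⟨fun _ => trivial, fun x _ => hμbasis x⟩
  have hprod := hlB.mul hμB hEMmem (fun x _ hb => map_mul_right_of_bimodule hEMbim x hb) hcomp
  rw [← Fintype.sum_prod_type']
  exact hprod.2 x trivial

theorem stmt4 {P : Type*} [Ring P] [StarRing P] [Algebra ℂ P] [StarModule ℂ P]
    (N M : StarSubalgebra ℂ P) (hNM : N ≤ M)
    (EN : P →ₗ[ℂ] P) (EM : P →ₗ[ℂ] P)
    (hENmem : ∀ x ∈ M, EN x ∈ N) (hENfix : ∀ x ∈ N, EN x = x)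
    (hENbim : ∀ a ∈ N, ∀ b ∈ N, ∀ x : P, EN (a * x * b) = a * EN x * b)
    (hEMmem : ∀ x : P, EM x ∈ M) (hEMfix : ∀ x ∈ M, EM x = x)
    (hEMbim : ∀ a ∈ M, ∀ b ∈ M, ∀ x : P, EM (a * x * b) = a * EM x * b)
    (hcomp : ∀ x : P, EN (EM x) = EN x)
    (m n : ℕ)
    (l : Fin m → P) (hl : ∀ i, l i ∈ M)
    (μ : Fin n → P)
    (hlbasis : ∀ x ∈ M, x = ∑ i, EN (x * star (l i)) * l i)
    (hμbasis : ∀ x : P, x = ∑ j, EM (x * star (μ j)) * μ j) :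
    ∀ x : P, x = ∑ i : Fin m, ∑ j : Fin n,
      EN (x * star (l i * μ j)) * (l i * μ j) :=
  stmt4_general M EN EM hEMmem hEMbim hcomp m n l hl μ hlbasis hμbasis
end

section
/- If {λᵢ : 1 ≤ i ≤ n} is a basis for M/N, then {τ^{-1/2} e₁ λᵢ : 1 ≤ i ≤ n} is a basis for M₁/M, where M₁ = ⟨M, e₁⟩ is the basic construction. -/
/-! With `v i = e₁ λᵢ`, the Temperley–Lieb relation gives `v i* e₂ v i = λᵢ* (e₁ e₂ e₁) λᵢ = τ λᵢ* e₁ λᵢ`,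
so the rescaling by `τ^{-1/2}` exactly cancels the factor `τ`. -/

theorem star_mul_mul_mul_of_mul_mul_eq_smul {R A : Type*} [CommSemiring R] [Semiring A]
    [StarRing A] [Algebra R A] {e f : A} {t : R} (he : star e = e)
    (hTL : e * f * e = t • e) (x : A) :
    star (e * x) * f * (e * x) = t • (star x * e * x) := by
  calc star (e * x) * f * (e * x) = star x * (e * f * e) * x := by
        rw [star_mul, he]; noncomm_ring
    _ = t • (star x * e * x) := by rw [hTL, mul_smul_comm, smul_mul_assoc]

theorem sum_star_smul_mul_smul {R A ι : Type*} [CommSemiring R] [StarRing R] [Semiring A]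
    [StarRing A] [Algebra R A] [StarModule R A] (s : Finset ι) (c : R) (f : A) (v : ι → A) :
    ∑ i ∈ s, star (c • v i) * f * (c • v i) = (star c * c) • ∑ i ∈ s, star (v i) * f * v i := by
  rw [Finset.smul_sum]
  refine Finset.sum_congr rfl fun i _ => ?_
  rw [star_smul, smul_mul_assoc, smul_mul_assoc, mul_smul_comm, smul_smul]

theorem Real.inv_sqrt_mul_self_mul {τ : ℝ} (hτ : 0 < τ) : (√τ)⁻¹ * (√τ)⁻¹ * τ = 1 := by
  rw [← mul_inv, Real.mul_self_sqrt hτ.le, inv_mul_cancel₀ hτ.ne']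

theorem stmt5_general {A : Type*} [Ring A] [StarRing A] [Algebra ℂ A] [StarModule ℂ A]
    (e₁ e₂ : A)
    (he₁star : star e₁ = e₁)
    (τ : ℝ) (hτ : 0 < τ)
    (hTL1 : e₁ * e₂ * e₁ = (τ : ℂ) • e₁)
    (n : ℕ) (l : Fin n → A)
    (hbasis : ∑ i, star (l i) * e₁ * l i = 1) :
    ∑ i, star ((((Real.sqrt τ)⁻¹ : ℝ) : ℂ) • (e₁ * l i)) * e₂ *
        ((((Real.sqrt τ)⁻¹ : ℝ) : ℂ) • (e₁ * l i)) = 1 := by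
  have hscalar : (star (((√τ)⁻¹ : ℝ) : ℂ) * (((√τ)⁻¹ : ℝ) : ℂ)) * (τ : ℂ) = 1 := by
    rw [Complex.star_def, Complex.conj_ofReal, ← Complex.ofReal_mul, ← Complex.ofReal_mul,
      Real.inv_sqrt_mul_self_mul hτ, Complex.ofReal_one]
  simp only [sum_star_smul_mul_smul, star_mul_mul_mul_of_mul_mul_eq_smul he₁star hTL1,
    ← Finset.smul_sum, hbasis, smul_smul, hscalar, one_smul]

theorem stmt5 {A : Type*} [Ring A] [StarRing A] [Algebra ℂ A] [StarModule ℂ A]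
    (N M M₁ : StarSubalgebra ℂ A) (hNM : N ≤ M) (hMM₁ : M ≤ M₁)
    (e₁ e₂ : A) (he₁ : e₁ ∈ M₁)
    (he₁proj : e₁ * e₁ = e₁) (he₁star : star e₁ = e₁)
    (he₂proj : e₂ * e₂ = e₂) (he₂star : star e₂ = e₂)
    (τ : ℝ) (hτ : 0 < τ)
    (hTL1 : e₁ * e₂ * e₁ = (τ : ℂ) • e₁)
    (hTL2 : e₂ * e₁ * e₂ = (τ : ℂ) • e₂)
    (n : ℕ) (l : Fin n → A) (hl : ∀ i, l i ∈ M)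
    (hbasis : ∑ i, star (l i) * e₁ * l i = 1) :
    ∑ i, star ((((Real.sqrt τ)⁻¹ : ℝ) : ℂ) • (e₁ * l i)) * e₂ *
        ((((Real.sqrt τ)⁻¹ : ℝ) : ℂ) • (e₁ * l i)) = 1 :=
  stmt5_general e₁ e₂ he₁star τ hτ hTL1 n l hbasis
end

section
/- Let N ⊆ M be a connected inclusion of finite dimensional C*-algebras with its unique Markov trace tr, and let α₀ be a *-automorphism of M with α₀(N) = N. Then α₀ is automatically trace-preserving: tr ∘ α₀ = tr. -/
/- STATEMENT 8: Let N ⊆ M be a connected inclusion of finite dimensional C*-algebras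
with its unique Markov trace tr of modulus τ, and let α₀ be a *-automorphism of M with
α₀(N) = N.  Then α₀ is automatically trace-preserving: tr ∘ α₀ = tr.

A Markov trace of modulus τ is a faithful positive tracial state s on M admitting an
extension to a basic construction-type algebra: an embedding ι of M into a star algebra
containing a projection e with e ι(x) e ∈ ι(N) e for all x ∈ M, together with a trace
Tr extending s and satisfying Tr(ι(x) e) = τ s(x).  Connectedness of the inclusion is
reflected in the uniqueness hypothesis on the Markov trace. -/

structure MarkovExtension {M : Type*} [Ring M] [StarRing M] [Algebra ℂ M] [StarModule ℂ M]
    (N : StarSubalgebra ℂ M) (τ : ℂ) (s : M →ₗ[ℂ] ℂ) where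
  carrier : Type
  [ringA : Ring carrier]
  [starA : StarRing carrier]
  [algA : Algebra ℂ carrier]
  emb : M →⋆ₐ[ℂ] carrier
  jproj : carrier
  Tr : carrier →ₗ[ℂ] ℂ
  inj : Function.Injective emb
  idem : jproj * jproj = jproj
  sa : star jproj = jproj
  jones : ∀ x : M, ∃ y ∈ N, jproj * emb x * jproj = emb y * jproj
  trace : ∀ x y : carrier, Tr (x * y) = Tr (y * x)
  extends' : ∀ x : M, Tr (emb x) = s x
  markov : ∀ x : M, Tr (emb x * jproj) = τ * s x

/-- `s` is a Markov trace of modulus `τ` for the inclusion `N ⊆ M`. -/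
def IsMarkovTrace {M : Type*} [Ring M] [StarRing M] [Algebra ℂ M] [StarModule ℂ M]
    (N : StarSubalgebra ℂ M) (τ : ℂ) (s : M →ₗ[ℂ] ℂ) : Prop :=
  s 1 = 1 ∧ (∀ x y : M, s (x * y) = s (y * x)) ∧
  (∀ x : M, 0 ≤ (s (star x * x)).re ∧ (s (star x * x)).im = 0) ∧
  (∀ x : M, s (star x * x) = 0 → x = 0) ∧
  Nonempty (MarkovExtension N τ s)

section StarAlgEquivComp

variable {M : Type*} [Ring M] [StarRing M] [Algebra ℂ M] [StarModule ℂ M]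
  {N : StarSubalgebra ℂ M} {τ : ℂ} {s : M →ₗ[ℂ] ℂ}

namespace MarkovExtension

def compStarAlgEquiv (E : MarkovExtension N τ s) (α : M ≃⋆ₐ[ℂ] M)
    (hN : ∀ x, α x ∈ N → x ∈ N) : MarkovExtension N τ (s ∘ₗ α.toAlgEquiv.toLinearMap) :=
  letI := E.ringA; letI := E.starA; letI := E.algA
  { carrier := E.carrier
    emb := E.emb.comp (α : M →⋆ₐ[ℂ] M)
    jproj := E.jproj
    Tr := E.Tr
    inj := E.inj.comp α.injective
    idem := E.idem
    sa := E.sa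
    jones := fun x => by
      obtain ⟨y, hy, h⟩ := E.jones (α x)
      exact ⟨α.symm y, hN _ (by simpa using hy), by simpa using h⟩
    trace := E.trace
    extends' := fun x => E.extends' (α x)
    markov := fun x => E.markov (α x) }

end MarkovExtension

theorem IsMarkovTrace.comp_starAlgEquiv (hs : IsMarkovTrace N τ s) (α : M ≃⋆ₐ[ℂ] M) (hN : ∀ x, α x ∈ N → x ∈ N) :
    IsMarkovTrace N τ (s ∘ₗ α.toAlgEquiv.toLinearMap) := by
  obtain ⟨h_one, h_comm, h_pos, h_faithful, ⟨E⟩⟩ := hs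
  have h_star_mul (x : M) : α (star x * x) = star (α x) * α x := by
    rw [map_mul, map_star]
  refine ⟨?_, fun x y => ?_, fun x => ?_, fun x hx => ?_, ⟨E.compStarAlgEquiv α hN⟩⟩
  · simpa using h_one
  · simpa using h_comm (α x) (α y)
  · simpa [h_star_mul] using h_pos (α x)
  · exact α.injective <| by simpa using h_faithful (α x) (by simpa [h_star_mul] using hx)

end StarAlgEquivComp

theorem stmt8_general {M : Type*} [Ring M] [StarRing M] [Algebra ℂ M] [StarModule ℂ M]
    (N : StarSubalgebra ℂ M) (τ : ℂ) (tr : M →ₗ[ℂ] ℂ)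
    (htr : IsMarkovTrace N τ tr)
    (huniq : ∀ s : M →ₗ[ℂ] ℂ, IsMarkovTrace N τ s → s = tr)
    (α₀ : M ≃⋆ₐ[ℂ] M) (hα₀ : ∀ x : M, x ∈ N ↔ α₀ x ∈ N) :
    ∀ x : M, tr (α₀ x) = tr x := by
  intro x
  have h_comp : tr ∘ₗ α₀.toAlgEquiv.toLinearMap = tr :=
    huniq _ (htr.comp_starAlgEquiv α₀ fun y => (hα₀ y).2)
  exact LinearMap.congr_fun h_comp x

theorem stmt8 {M : Type*} [Ring M] [StarRing M] [Algebra ℂ M] [StarModule ℂ M] [FiniteDimensional ℂ M]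
    (N : StarSubalgebra ℂ M) (τ : ℂ) (tr : M →ₗ[ℂ] ℂ)
    (htr : IsMarkovTrace N τ tr)
    (huniq : ∀ s : M →ₗ[ℂ] ℂ, IsMarkovTrace N τ s → s = tr)
    (α₀ : M ≃⋆ₐ[ℂ] M) (hα₀ : ∀ x : M, x ∈ N ↔ α₀ x ∈ N) :
    ∀ x : M, tr (α₀ x) = tr x :=
  stmt8_general N τ tr htr huniq α₀ hα₀
end

section
/- Let N ⊆ M be a finite-index II₁ factor inclusion with basis {λᵢ : 1 ≤ i ≤ n}. Suppose P is a II₁ factor containing M and a projection f ∈ P with Σᵢ λᵢ* f λᵢ = 1, fxf = E_N(x)f for all x ∈ M, and {τ^{-1/2} f λᵢ} a basis for P/M. Then there is an isomorphism from M₁ = ⟨M, e₁⟩ onto P which is the identity on M and maps e₁ to f. -/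
/-!
Every `m ∈ M₁` compresses `ι(M) e₁` into itself, `m ι(a) e₁ = ι(π m a) e₁` with `π = toEnd`;
since `M₁` is generated by `ι(M)` and `e₁`, this makes `π : M₁ → End M` an algebra map, injective
because `M₁` is simple. Through `π` the element `∑ᵢ λᵢ* e₁ λᵢ` acts as `a ↦ ∑ᵢ λᵢ* E_N(λᵢ a) = a`,
so it equals `1`, whence `m = ∑ᵢ ι(π m λᵢ*) e₁ ι(λᵢ)`. Sending this to `∑ᵢ κ(π m λᵢ*) f κ(λᵢ)`
maps `ι(a) e₁ ι(b)` to `κ(a) f κ(b)`, and both families multiply by the same rule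
`(x e y)(z e w) = x E_N(y z) e w`, so the map is a *-homomorphism. It is injective since `M₁` is
simple, and onto since `{τ^{-1/2} f λᵢ}` is a basis for `P/M`.
-/

open Finset

section JonesRelation

variable {M A F : Type*} [Semiring M] [Semiring A] [FunLike F M A] [RingHomClass F M A]
  {ι : F} {e : A} {E : M → M}

theorem mul_mul_mul_mul_of_jones (hjones : ∀ x, e * ι x * e = ι (E x) * e) (a b c d : M) :
    ι a * e * ι b * (ι c * e * ι d) = ι (a * E (b * c)) * e * ι d := by
  calc ι a * e * ι b * (ι c * e * ι d) = ι a * (e * ι (b * c) * e) * ι d := by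
        simp only [map_mul, mul_assoc]
    _ = ι (a * E (b * c)) * e * ι d := by rw [hjones, map_mul]; simp only [mul_assoc]

theorem sum_mul_mul_eq_of_jones {I : Type*} [Fintype I] (hjones : ∀ x, e * ι x * e = ι (E x) * e)
    {l' l : I → M} (hsum : ∑ i, ι (l' i) * e * ι (l i) = 1) (a b : M) :
    ∑ i, ι (a * E (b * l' i)) * e * ι (l i) = ι a * e * ι b := by
  rw [← mul_one (ι a * e * ι b), ← hsum, mul_sum]
  exact sum_congr rfl fun i _ => (mul_mul_mul_mul_of_jones hjones _ _ _ _).symm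

end JonesRelation

theorem star_mul_mul_of_isSelfAdjoint {M A F : Type*} [Semiring M] [StarRing M] [Semiring A]
    [StarRing A] [FunLike F M A] [StarHomClass F M A] {ι : F} {e : A}
    (he : IsSelfAdjoint e) (a b : M) :
    star (ι a * e * ι b) = ι (star b) * e * ι (star a) := by
  simp only [star_mul, ← map_star, he.star_eq, mul_assoc]

structure IsBasicConstruction (R : Type*) {M A F : Type*} [CommSemiring R] [Semiring M]
    [Semiring A] [Algebra R A] [FunLike F M A] (E : M → M) (ι : F) (e : A) : Prop where
  jones : ∀ x, e * ι x * e = ι (E x) * e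
  adjoin_eq_top : Algebra.adjoin R (insert e (Set.range ι)) = ⊤
  eq_zero_of_mul_eq_zero : ∀ x, ι x * e = 0 → x = 0

namespace IsBasicConstruction

variable {R M A F : Type*} [CommRing R] [Ring M] [Ring A] [Algebra R M] [Algebra R A]
  [FunLike F M A] [AlgHomClass F R M A] {E : M → M} {ι : F} {e : A}

theorem exists_mul_mul_eq (h : IsBasicConstruction R E ι e) (m : A) (a : M) :
    ∃ c, m * ι a * e = ι c * e := by
  have hm : m ∈ Algebra.adjoin R (insert e (Set.range ι)) := h.adjoin_eq_top ▸ Algebra.mem_top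
  induction hm using Algebra.adjoin_induction generalizing a with
  | mem x hx =>
    rcases hx with rfl | ⟨y, rfl⟩
    · exact ⟨E a, h.jones a⟩
    · exact ⟨y * a, by rw [map_mul]⟩
  | algebraMap r => exact ⟨r • a, by rw [map_smul, Algebra.smul_def]⟩
  | add x y _ _ hx hy =>
    obtain ⟨c, hc⟩ := hx a
    obtain ⟨d, hd⟩ := hy a
    exact ⟨c + d, by rw [add_mul, add_mul, hc, hd, map_add, add_mul]⟩
  | mul x y _ _ hx hy =>
    obtain ⟨d, hd⟩ := hy a
    obtain ⟨c, hc⟩ := hx d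
    exact ⟨c, by rw [mul_assoc x, mul_assoc x, hd, ← mul_assoc, hc]⟩

theorem eq_of_mul_eq (h : IsBasicConstruction R E ι e) {c d : M} (hcd : ι c * e = ι d * e) :
    c = d :=
  sub_eq_zero.mp (h.eq_zero_of_mul_eq_zero _ (by rw [map_sub, sub_mul, hcd, sub_self]))

noncomputable def compress (h : IsBasicConstruction R E ι e) (m : A) (a : M) : M :=
  (h.exists_mul_mul_eq m a).choose

theorem mul_mul_eq_compress (h : IsBasicConstruction R E ι e) (m : A) (a : M) :
    m * ι a * e = ι (h.compress m a) * e :=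
  (h.exists_mul_mul_eq m a).choose_spec

theorem compress_eq (h : IsBasicConstruction R E ι e) {m : A} {a c : M}
    (hc : m * ι a * e = ι c * e) : h.compress m a = c :=
  h.eq_of_mul_eq ((h.mul_mul_eq_compress m a).symm.trans hc)

noncomputable def toEnd (h : IsBasicConstruction R E ι e) : A →ₐ[R] Module.End R M where
  toFun m :=
    { toFun := h.compress m
      map_add' a b := h.compress_eq <| by
        rw [map_add, mul_add, add_mul, map_add, add_mul, h.mul_mul_eq_compress,
          h.mul_mul_eq_compress]
      map_smul' r a := h.compress_eq <| by
        rw [map_smul, mul_smul_comm, smul_mul_assoc, h.mul_mul_eq_compress, map_smul,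
          smul_mul_assoc, RingHom.id_apply] }
  map_one' := LinearMap.ext fun a => h.compress_eq <| by rw [one_mul, Module.End.one_apply]
  map_mul' m m' := LinearMap.ext fun a => h.compress_eq <| by
    rw [mul_assoc m, mul_assoc m, h.mul_mul_eq_compress m', ← mul_assoc, h.mul_mul_eq_compress]
    rfl
  map_zero' := LinearMap.ext fun a => h.compress_eq <| by
    rw [zero_mul, zero_mul, LinearMap.zero_apply, map_zero, zero_mul]
  map_add' m m' := LinearMap.ext fun a => h.compress_eq <| by
    rw [add_mul, add_mul, h.mul_mul_eq_compress, h.mul_mul_eq_compress, LinearMap.add_apply,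
      map_add, add_mul]
    rfl
  commutes' r := LinearMap.ext fun a => h.compress_eq <| by
    rw [Module.algebraMap_end_apply, map_smul, ← Algebra.smul_def, smul_mul_assoc]

theorem mul_mul_eq_toEnd (h : IsBasicConstruction R E ι e) (m : A) (a : M) :
    m * ι a * e = ι (h.toEnd m a) * e :=
  h.mul_mul_eq_compress m a

theorem toEnd_apply_eq (h : IsBasicConstruction R E ι e) {m : A} {a c : M}
    (hc : m * ι a * e = ι c * e) : h.toEnd m a = c :=
  h.compress_eq hc

theorem toEnd_apply_map (h : IsBasicConstruction R E ι e) (x a : M) : h.toEnd (ι x) a = x * a :=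
  h.toEnd_apply_eq (by rw [map_mul])

theorem toEnd_mul_mul_apply (h : IsBasicConstruction R E ι e) (a b x : M) :
    h.toEnd (ι a * e * ι b) x = a * E (b * x) :=
  h.toEnd_apply_eq <| by
    calc ι a * e * ι b * ι x * e = ι a * (e * ι (b * x) * e) := by simp only [map_mul, mul_assoc]
      _ = ι (a * E (b * x)) * e := by rw [h.jones, map_mul, mul_assoc]

theorem toEnd_injective [IsSimpleRing A] (h : IsBasicConstruction R E ι e) :
    Function.Injective h.toEnd :=
  have : Nontrivial M := (ι : M →+* A).domain_nontrivial
  RingHom.injective (h.toEnd : A →+* Module.End R M)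

variable {I : Type*} [Fintype I] {l' l : I → M}

theorem sum_mul_mul_eq_one [IsSimpleRing A] (h : IsBasicConstruction R E ι e)
    (hdual : ∀ x, ∑ i, l' i * E (l i * x) = x) : ∑ i, ι (l' i) * e * ι (l i) = 1 :=
  h.toEnd_injective <| LinearMap.ext fun x => by
    simp only [map_sum, LinearMap.sum_apply, toEnd_mul_mul_apply, hdual,
      map_one, Module.End.one_apply]

theorem eq_sum_mul_mul [IsSimpleRing A] (h : IsBasicConstruction R E ι e)
    (hdual : ∀ x, ∑ i, l' i * E (l i * x) = x) (m : A) :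
    m = ∑ i, ι (h.toEnd m (l' i)) * e * ι (l i) := by
  conv_lhs => rw [← mul_one m, ← h.sum_mul_mul_eq_one hdual, mul_sum]
  simp only [← mul_assoc, h.mul_mul_eq_toEnd]

variable {P G : Type*} [Ring P] [Algebra R P] [FunLike G M P] [AlgHomClass G R M P]

noncomputable def lift (h : IsBasicConstruction R E ι e) (κ : G) (f : P) (l' l : I → M) :
    A →ₗ[R] P where
  toFun m := ∑ i, κ (h.toEnd m (l' i)) * f * κ (l i)
  map_add' m m' := by simp only [map_add, LinearMap.add_apply, add_mul, sum_add_distrib]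
  map_smul' r m := by
    simp only [map_smul, LinearMap.smul_apply, smul_mul_assoc, smul_sum, RingHom.id_apply]

theorem lift_apply (h : IsBasicConstruction R E ι e) (κ : G) (f : P) (m : A) :
    h.lift κ f l' l m = ∑ i, κ (h.toEnd m (l' i)) * f * κ (l i) :=
  rfl

variable {κ : G} {f : P}

theorem lift_map (h : IsBasicConstruction R E ι e) (hsum : ∑ i, κ (l' i) * f * κ (l i) = 1)
    (x : M) : h.lift κ f l' l (ι x) = κ x := by
  simp only [lift_apply, toEnd_apply_map, map_mul, mul_assoc, ← mul_sum]
  simp only [← mul_assoc, hsum, mul_one]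

theorem lift_mul_mul (h : IsBasicConstruction R E ι e) (hjones : ∀ x, f * κ x * f = κ (E x) * f)
    (hsum : ∑ i, κ (l' i) * f * κ (l i) = 1) (a b : M) :
    h.lift κ f l' l (ι a * e * ι b) = κ a * f * κ b := by
  simp only [lift_apply, toEnd_mul_mul_apply]
  exact sum_mul_mul_eq_of_jones hjones hsum a b

theorem lift_e (h : IsBasicConstruction R E ι e) (hjones : ∀ x, f * κ x * f = κ (E x) * f)
    (hsum : ∑ i, κ (l' i) * f * κ (l i) = 1) : h.lift κ f l' l e = f := by
  simpa using h.lift_mul_mul hjones hsum 1 1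

theorem lift_mul [IsSimpleRing A] (h : IsBasicConstruction R E ι e)
    (hdual : ∀ x, ∑ i, l' i * E (l i * x) = x) (hjones : ∀ x, f * κ x * f = κ (E x) * f)
    (hsum : ∑ i, κ (l' i) * f * κ (l i) = 1) (m m' : A) :
    h.lift κ f l' l (m * m') = h.lift κ f l' l m * h.lift κ f l' l m' := by
  conv_lhs => rw [h.eq_sum_mul_mul hdual m, h.eq_sum_mul_mul hdual m', sum_mul_sum]
  simp only [map_sum, mul_mul_mul_mul_of_jones h.jones, h.lift_mul_mul hjones hsum,
    ← mul_mul_mul_mul_of_jones hjones, lift_apply, sum_mul_sum]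

theorem lift_star [IsSimpleRing A] [StarRing M] [StarRing A] [StarRing P] [StarHomClass F M A]
    [StarHomClass G M P] (h : IsBasicConstruction R E ι e)
    (hdual : ∀ x, ∑ i, l' i * E (l i * x) = x) (hjones : ∀ x, f * κ x * f = κ (E x) * f)
    (hsum : ∑ i, κ (l' i) * f * κ (l i) = 1) (he : IsSelfAdjoint e) (hf : IsSelfAdjoint f)
    (m : A) : h.lift κ f l' l (star m) = star (h.lift κ f l' l m) := by
  conv_lhs => rw [h.eq_sum_mul_mul hdual m]
  simp only [star_sum, map_sum, star_mul_mul_of_isSelfAdjoint he, h.lift_mul_mul hjones hsum,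
    ← star_mul_mul_of_isSelfAdjoint hf, lift_apply]

theorem lift_surjective (h : IsBasicConstruction R E ι e)
    (hjones : ∀ x, f * κ x * f = κ (E x) * f) (hsum : ∑ i, κ (l' i) * f * κ (l i) = 1)
    (hspan : ∀ z : P, ∃ c : I → M, z = ∑ i, κ (c i) * f * κ (l i)) :
    Function.Surjective (h.lift κ f l' l) := fun z => by
  obtain ⟨c, rfl⟩ := hspan z
  exact ⟨∑ i, ι (c i) * e * ι (l i), by simp only [map_sum, h.lift_mul_mul hjones hsum]⟩

noncomputable def liftStarAlgHom [IsSimpleRing A] [StarRing M] [StarRing A] [StarRing P]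
    [StarHomClass F M A] [StarHomClass G M P] (h : IsBasicConstruction R E ι e)
    (hdual : ∀ x, ∑ i, l' i * E (l i * x) = x) (hjones : ∀ x, f * κ x * f = κ (E x) * f)
    (hsum : ∑ i, κ (l' i) * f * κ (l i) = 1) (he : IsSelfAdjoint e) (hf : IsSelfAdjoint f) :
    A →⋆ₐ[R] P where
  toFun := h.lift κ f l' l
  map_one' := by simpa using h.lift_map hsum 1
  map_mul' := h.lift_mul hdual hjones hsum
  map_zero' := map_zero _
  map_add' := map_add _
  commutes' r := by
    rw [Algebra.algebraMap_eq_smul_one, Algebra.algebraMap_eq_smul_one, map_smul]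
    simpa using congr_arg (r • ·) (h.lift_map hsum 1)
  map_star' := h.lift_star hdual hjones hsum he hf

end IsBasicConstruction

theorem sum_star_mul_eq_of_eq_sum {M I : Type*} [Ring M] [StarRing M] [Fintype I] {E : M → M}
    (hE : ∀ x, E (star x) = star (E x)) {l : I → M}
    (hbasis : ∀ x, x = ∑ i, E (x * star (l i)) * l i)
    (x : M) : ∑ i, star (l i) * E (l i * x) = x := by
  simpa only [star_sum, star_mul, star_star, ← hE] using congr_arg star (hbasis (star x)).symm

theorem stmt12_general {M M₁ P : Type*}
    [Ring M] [StarRing M] [Algebra ℂ M]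
    [Ring M₁] [StarRing M₁] [Algebra ℂ M₁]
    [Ring P] [StarRing P] [Algebra ℂ P]
    (hsimple : IsSimpleRing M₁)
    (EN : M →ₗ[ℂ] M)
    (hENstar : ∀ x : M, EN (star x) = star (EN x))
    (τ : ℝ)
    (n : ℕ) (l : Fin n → M)
    (hbasis : ∀ x : M, x = ∑ i, EN (x * star (l i)) * l i)
    -- the basic construction M₁ = ⟨M, e₁⟩
    (ι : M →⋆ₐ[ℂ] M₁)
    (e₁ : M₁) (hestar : star e₁ = e₁)
    (hjones : ∀ x : M, e₁ * ι x * e₁ = ι (EN x) * e₁)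
    (hgen : Algebra.adjoin ℂ (insert e₁ (Set.range ι)) = ⊤)
    (hsep : ∀ x : M, ι x * e₁ = 0 → x = 0)
    -- the algebra P containing M and the projection f
    (κ : M →⋆ₐ[ℂ] P) (hκ : Function.Injective κ)
    (f : P) (hfstar : star f = f)
    (hsum : ∑ i, star (κ (l i)) * f * κ (l i) = 1)
    (hfMf : ∀ x : M, f * κ x * f = κ (EN x) * f)
    (EPM : P →ₗ[ℂ] M)
    (hPbasis : ∀ z : P, z = ∑ i,
      κ (EPM (z * star (((((Real.sqrt τ)⁻¹ : ℝ) : ℂ)) • (f * κ (l i))))) *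
        (((((Real.sqrt τ)⁻¹ : ℝ) : ℂ)) • (f * κ (l i)))) :
    ∃ φ : M₁ ≃⋆ₐ[ℂ] P, (∀ x : M, φ (ι x) = κ x) ∧ φ e₁ = f := by
  have hM₁ : IsBasicConstruction ℂ EN ι e₁ := ⟨hjones, hgen, hsep⟩
  have hdual := sum_star_mul_eq_of_eq_sum hENstar hbasis
  have hsumP : ∑ i, κ (star (l i)) * f * κ (l i) = 1 := by simpa only [map_star] using hsum
  let Φ := hM₁.liftStarAlgHom hdual hfMf hsumP hestar hfstar
  have hΦinj : Function.Injective Φ :=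
    have : Nontrivial M := (ι : M →+* M₁).domain_nontrivial
    have : Nontrivial P := hκ.nontrivial
    RingHom.injective (Φ : M₁ →+* P)
  have hΦsurj : Function.Surjective Φ := by
    set s : ℂ := (((Real.sqrt τ)⁻¹ : ℝ) : ℂ)
    refine hM₁.lift_surjective hfMf hsumP fun z =>
      ⟨fun i => s • EPM (z * star (s • (f * κ (l i)))), ?_⟩
    conv_lhs => rw [hPbasis z]
    simp only [map_smul, smul_mul_assoc, mul_smul_comm, mul_assoc]
  exact ⟨.ofBijective Φ ⟨hΦinj, hΦsurj⟩, hM₁.lift_map hsumP, hM₁.lift_e hfMf hsumP⟩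

theorem stmt12 {M M₁ P : Type*}
    [Ring M] [StarRing M] [Algebra ℂ M] [StarModule ℂ M]
    [Ring M₁] [StarRing M₁] [Algebra ℂ M₁] [StarModule ℂ M₁]
    [Ring P] [StarRing P] [Algebra ℂ P] [StarModule ℂ P]
    (hsimple : IsSimpleRing M₁)
    (N : StarSubalgebra ℂ M)
    (EN : M →ₗ[ℂ] M)
    (hENmem : ∀ x : M, EN x ∈ N) (hENfix : ∀ x ∈ N, EN x = x)
    (hENbim : ∀ a ∈ N, ∀ b ∈ N, ∀ x : M, EN (a * x * b) = a * EN x * b)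
    (hENstar : ∀ x : M, EN (star x) = star (EN x))
    (τ : ℝ) (hτ : 0 < τ)
    (n : ℕ) (l : Fin n → M)
    (hbasis : ∀ x : M, x = ∑ i, EN (x * star (l i)) * l i)
    -- the basic construction M₁ = ⟨M, e₁⟩
    (ι : M →⋆ₐ[ℂ] M₁) (hι : Function.Injective ι)
    (e₁ : M₁) (heproj : e₁ * e₁ = e₁) (hestar : star e₁ = e₁)
    (hjones : ∀ x : M, e₁ * ι x * e₁ = ι (EN x) * e₁)
    (hgen : Algebra.adjoin ℂ (insert e₁ (Set.range ι)) = ⊤)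
    (hsep : ∀ x : M, ι x * e₁ = 0 → x = 0)
    -- the algebra P containing M and the projection f
    (κ : M →⋆ₐ[ℂ] P) (hκ : Function.Injective κ)
    (f : P) (hfproj : f * f = f) (hfstar : star f = f)
    (hsum : ∑ i, star (κ (l i)) * f * κ (l i) = 1)
    (hfMf : ∀ x : M, f * κ x * f = κ (EN x) * f)
    (EPM : P →ₗ[ℂ] M) (hEPMfix : ∀ x : M, EPM (κ x) = x)
    (hPbasis : ∀ z : P, z = ∑ i,
      κ (EPM (z * star (((((Real.sqrt τ)⁻¹ : ℝ) : ℂ)) • (f * κ (l i))))) *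
        (((((Real.sqrt τ)⁻¹ : ℝ) : ℂ)) • (f * κ (l i)))) :
    ∃ φ : M₁ ≃⋆ₐ[ℂ] P, (∀ x : M, φ (ι x) = κ x) ∧ φ e₁ = f :=
  stmt12_general hsimple EN hENstar τ n l hbasis ι e₁ hestar hjones hgen hsep κ hκ f hfstar hsum
    hfMf EPM hPbasis
end

section
/- Define e_{[−1,n]} recursively by e_{[−1,0]} = e₁ and e_{[−1,n+1]} = τ^{−(n+1)}(e_{n+2}⋯e_{2n+3}) e_{[−1,n]} (e_{2n+2}⋯e_{n+2}). Then e_{[−1,n]} x e_{[−1,n]} = E_N(x) e_{[−1,n]} for all x ∈ Mₙ and all n ≥ 0. -/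
/- STATEMENT 16: Define e_{[−1,n]} recursively by e_{[−1,0]} = e₁ and
e_{[−1,n+1]} = τ^{−(n+1)} (e_{n+2}⋯e_{2n+3}) e_{[−1,n]} (e_{2n+2}⋯e_{n+2}).
Then e_{[−1,n]} x e_{[−1,n]} = E_N(x) e_{[−1,n]} for all x ∈ Mₙ and all n ≥ 0.

Tower convention: Mt 0 = N, Mt 1 = M, Mt (j+1) = Mⱼ; the Jones projection e j
(j ≥ 1) implements the conditional expectation EE j : Mt j → Mt (j-1); ENc is the
composite trace-preserving conditional expectation onto N; the e j satisfy the
Temperley–Lieb relations with modulus τ. -/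

/-- e_{[−1,n]}: e_{[−1,0]} = e₁,
e_{[−1,n+1]} = τ^{−(n+1)} (e_{n+2}⋯e_{2n+3}) e_{[−1,n]} (e_{2n+2}⋯e_{n+2}). -/
noncomputable def ebr {A : Type*} [Ring A] [Algebra ℂ A] (τ : ℂ) (e : ℕ → A) : ℕ → A
  | 0 => e 1
  | n + 1 =>
      (τ ^ (n + 1))⁻¹ •
        (((List.range (n + 2)).map (fun t => e (n + 2 + t))).prod *
          ebr τ e n *
          ((List.range (n + 1)).map (fun t => e (2 * n + 2 - t))).prod)

/-- A list product commutes with an element commuting with each factor. -/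
private lemma listprod_comm {A : Type*} [Ring A] (l : List A) (y : A)
    (h : ∀ z ∈ l, z * y = y * z) : l.prod * y = y * l.prod := by
  induction l with
  | nil => simp
  | cons a t ih =>
    simp only [List.prod_cons]
    rw [mul_assoc, ih (fun z hz => h z (List.mem_cons_of_mem a hz)),
      ← mul_assoc, h a List.mem_cons_self, mul_assoc]

/-- Temperley–Lieb collapse:
(e_{a+k}⋯e_{a+1}) e_a (e_{a+1}⋯e_{a+k}) = τ^k e_{a+k}. -/
private lemma collapse {A : Type*} [Ring A] [Algebra ℂ A] (e : ℕ → A) (τ : ℂ)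
    (hTL2 : ∀ j, 1 ≤ j → e (j + 1) * e j * e (j + 1) = τ • e (j + 1)) (a : ℕ) (ha : 1 ≤ a) :
    ∀ k, (((List.range k).map (fun t => e (a + k - t))).prod) * e a *
      (((List.range k).map (fun t => e (a + 1 + t))).prod) = τ ^ k • e (a + k) := by
  intro k
  induction k with
  | zero => simp
  | succ k ih =>
    have hD : ((List.range (k + 1)).map (fun t => e (a + (k + 1) - t))).prod
        = e (a + k + 1) * ((List.range k).map (fun t => e (a + k - t))).prod := by
      rw [List.range_succ_eq_map]
      simp only [List.map_cons, List.prod_cons, List.map_map, Nat.sub_zero]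
      have hfun : ((fun t => e (a + (k + 1) - t)) ∘ Nat.succ) = (fun t => e (a + k - t)) := by
        funext t
        simp only [Function.comp_apply]
        congr 1
        omega
      rw [hfun]
      have hidx : a + (k + 1) = a + k + 1 := by omega
      rw [hidx]
    have hA : ((List.range (k + 1)).map (fun t => e (a + 1 + t))).prod
        = ((List.range k).map (fun t => e (a + 1 + t))).prod * e (a + k + 1) := by
      rw [List.range_succ]
      simp only [List.map_append, List.map_cons, List.map_nil, List.prod_append,
        List.prod_cons, List.prod_nil, mul_one]
      congr 2
      omega
    rw [hD, hA]
    show _ = τ ^ (k + 1) • e (a + k + 1)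
    have hstep := hTL2 (a + k) (by omega)
    calc e (a + k + 1) * ((List.range k).map (fun t => e (a + k - t))).prod * e a *
          (((List.range k).map (fun t => e (a + 1 + t))).prod * e (a + k + 1))
        = e (a + k + 1) * (((List.range k).map (fun t => e (a + k - t))).prod * e a *
            ((List.range k).map (fun t => e (a + 1 + t))).prod) * e (a + k + 1) := by
          simp only [mul_assoc]
      _ = e (a + k + 1) * (τ ^ k • e (a + k)) * e (a + k + 1) := by rw [ih]
      _ = τ ^ k • (e (a + k + 1) * e (a + k) * e (a + k + 1)) := by
          simp only [mul_smul_comm, smul_mul_assoc]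
      _ = τ ^ k • (τ • e (a + k + 1)) := by rw [hstep]
      _ = τ ^ (k + 1) • e (a + k + 1) := by rw [smul_smul, ← pow_succ]

theorem stmt16 {A : Type*} [Ring A] [StarRing A] [Algebra ℂ A] [StarModule ℂ A]
    (Mt : ℕ → StarSubalgebra ℂ A) (hmono : Monotone Mt)
    (e : ℕ → A) (τ : ℝ) (hτ : 0 < τ)
    (hemem : ∀ j, 1 ≤ j → e j ∈ Mt (j + 1))
    (heproj : ∀ j, 1 ≤ j → e j * e j = e j)
    (hestar : ∀ j, 1 ≤ j → star (e j) = e j)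
    (hTL1 : ∀ j, 1 ≤ j → e j * e (j + 1) * e j = (τ : ℂ) • e j)
    (hTL2 : ∀ j, 1 ≤ j → e (j + 1) * e j * e (j + 1) = (τ : ℂ) • e (j + 1))
    (hTLc : ∀ i j, 1 ≤ i → i + 2 ≤ j → e i * e j = e j * e i)
    (EE : ℕ → (A →ₗ[ℂ] A))
    (hEEmem : ∀ j, 1 ≤ j → ∀ x : A, EE j x ∈ Mt (j - 1))
    (hEEfix : ∀ j, 1 ≤ j → ∀ x ∈ Mt (j - 1), EE j x = x)
    (hEEbim : ∀ j, 1 ≤ j → ∀ a ∈ Mt (j - 1), ∀ b ∈ Mt (j - 1), ∀ x : A,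
      EE j (a * x * b) = a * EE j x * b)
    (hjones : ∀ j, 1 ≤ j → ∀ x ∈ Mt j, e j * x * e j = EE j x * e j)
    (hecomm : ∀ j, 1 ≤ j → ∀ x ∈ Mt (j - 1), e j * x = x * e j)
    (ENc : A →ₗ[ℂ] A)
    (hENcmem : ∀ x : A, ENc x ∈ Mt 0) (hENcfix : ∀ x ∈ Mt 0, ENc x = x)
    (hENcbim : ∀ a ∈ Mt 0, ∀ b ∈ Mt 0, ∀ x : A, ENc (a * x * b) = a * ENc x * b)
    (hENc1 : ∀ x ∈ Mt 1, ENc x = EE 1 x)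
    (hENccomp : ∀ j, 1 ≤ j → ∀ x : A, ENc (EE j x) = ENc x) :
    ∀ n : ℕ, ∀ x ∈ Mt (n + 1),
      ebr (τ : ℂ) e n * x * ebr (τ : ℂ) e n = ENc x * ebr (τ : ℂ) e n := by
  have hτc : (τ : ℂ) ≠ 0 := by
    simp only [ne_eq, Complex.ofReal_eq_zero]
    exact ne_of_gt hτ
  -- membership of ebr in the tower
  have hebrmem : ∀ m, ebr (τ : ℂ) e m ∈ Mt (2 * m + 2) := by
    intro m
    induction m with
    | zero =>
      simpa [ebr] using hemem 1 le_rfl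
    | succ m ihm =>
      simp only [ebr]
      apply SMulMemClass.smul_mem
      refine mul_mem (mul_mem ?_ ?_) ?_
      · refine list_prod_mem ?_
        intro z hz
        simp only [List.mem_map, List.mem_range] at hz
        obtain ⟨t, ht, rfl⟩ := hz
        exact hmono (show m + 2 + t + 1 ≤ 2 * (m + 1) + 2 by omega) (hemem _ (by omega))
      · exact hmono (by omega) ihm
      · refine list_prod_mem ?_
        intro z hz
        simp only [List.mem_map, List.mem_range] at hz
        obtain ⟨t, ht, rfl⟩ := hz
        exact hmono (show 2 * m + 2 - t + 1 ≤ 2 * (m + 1) + 2 by omega) (hemem _ (by omega))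
  intro n
  induction n with
  | zero =>
    intro x hx
    show e 1 * x * e 1 = ENc x * e 1
    rw [hjones 1 le_rfl x hx, hENc1 x hx]
  | succ n ih =>
    intro x hx
    simp only [ebr]
    set f := ebr (τ : ℂ) e n with hfdef
    set P := ((List.range (n + 2)).map (fun t => e (n + 2 + t))).prod with hPdef
    set Q := ((List.range (n + 1)).map (fun t => e (2 * n + 2 - t))).prod with hQdef
    have hx' : x ∈ Mt (n + 2) := hx
    have hymem : EE (n + 2) x ∈ Mt (n + 1) := by
      have := hEEmem (n + 2) (by omega) x
      simpa using this
    set y := EE (n + 2) x with hydef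
    have hfmem : f ∈ Mt (2 * n + 2) := hebrmem n
    -- splitting of Q and P
    have hQsplit : Q = ((List.range n).map (fun t => e (2 * n + 2 - t))).prod * e (n + 2) := by
      rw [hQdef, List.range_succ]
      simp only [List.map_append, List.map_cons, List.map_nil, List.prod_append,
        List.prod_cons, List.prod_nil, mul_one]
      congr 2
      omega
    have hPsplit1 : P = ((List.range (n + 1)).map (fun t => e (n + 2 + t))).prod
        * e (2 * n + 3) := by
      rw [hPdef, List.range_succ]
      simp only [List.map_append, List.map_cons, List.map_nil, List.prod_append,
        List.prod_cons, List.prod_nil, mul_one]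
      congr 2
      omega
    have hPmsplit : ((List.range (n + 1)).map (fun t => e (n + 2 + t))).prod
        = e (n + 2) * ((List.range n).map (fun t => e (n + 3 + t))).prod := by
      rw [List.range_succ_eq_map]
      simp only [List.map_cons, List.prod_cons, List.map_map, Nat.add_zero]
      have hfun : ((fun t => e (n + 2 + t)) ∘ Nat.succ) = (fun t => e (n + 3 + t)) := by
        funext t
        simp only [Function.comp_apply]
        congr 1
        omega
      rw [hfun]
    -- y commutes with the descending run
    have hDy : ((List.range n).map (fun t => e (2 * n + 2 - t))).prod * y
        = y * ((List.range n).map (fun t => e (2 * n + 2 - t))).prod := by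
      apply listprod_comm
      intro z hz
      simp only [List.mem_map, List.mem_range] at hz
      obtain ⟨t, ht, rfl⟩ := hz
      exact hecomm _ (by omega) y (hmono (by omega) hymem)
    -- the collapse identity
    have hcol : ((List.range n).map (fun t => e (2 * n + 2 - t))).prod * e (n + 2) *
        ((List.range n).map (fun t => e (n + 3 + t))).prod = (τ : ℂ) ^ n • e (2 * n + 2) := by
      have h := collapse e (τ : ℂ) hTL2 (n + 2) (by omega) n
      have h1 : (fun t => e (n + 2 + n - t)) = (fun t => e (2 * n + 2 - t)) := by
        funext t
        congr 1
        all_goals omega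
      have h2 : (fun t => e (n + 2 + 1 + t)) = (fun t => e (n + 3 + t)) := by
        funext t
        congr 1
        all_goals omega
      have h3 : n + 2 + n = 2 * n + 2 := by omega
      rw [h1, h2, h3] at h
      exact h
    -- key: Q * x * P = τ^n • (y * e(2n+2) * e(2n+3))
    have key : Q * x * P = (τ : ℂ) ^ n • (y * e (2 * n + 2) * e (2 * n + 3)) := by
      rw [hQsplit, hPsplit1, hPmsplit]
      calc ((List.range n).map (fun t => e (2 * n + 2 - t))).prod * e (n + 2) * x *
            (e (n + 2) * ((List.range n).map (fun t => e (n + 3 + t))).prod * e (2 * n + 3))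
          = ((List.range n).map (fun t => e (2 * n + 2 - t))).prod *
              (e (n + 2) * x * e (n + 2)) *
              ((List.range n).map (fun t => e (n + 3 + t))).prod * e (2 * n + 3) := by
            simp only [mul_assoc]
        _ = ((List.range n).map (fun t => e (2 * n + 2 - t))).prod * (y * e (n + 2)) *
              ((List.range n).map (fun t => e (n + 3 + t))).prod * e (2 * n + 3) := by
            rw [hjones (n + 2) (by omega) x hx', ← hydef]
        _ = ((List.range n).map (fun t => e (2 * n + 2 - t))).prod * y * e (n + 2) *
              ((List.range n).map (fun t => e (n + 3 + t))).prod * e (2 * n + 3) := by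
            simp only [mul_assoc]
        _ = y * (((List.range n).map (fun t => e (2 * n + 2 - t))).prod * e (n + 2) *
              ((List.range n).map (fun t => e (n + 3 + t))).prod) * e (2 * n + 3) := by
            rw [hDy]; simp only [mul_assoc]
        _ = y * ((τ : ℂ) ^ n • e (2 * n + 2)) * e (2 * n + 3) := by rw [hcol]
        _ = (τ : ℂ) ^ n • (y * e (2 * n + 2) * e (2 * n + 3)) := by
            simp only [mul_smul_comm, smul_mul_assoc]
    have key' : ∀ r : A, Q * (x * (P * r))
        = (τ : ℂ) ^ n • (y * (e (2 * n + 2) * (e (2 * n + 3) * r))) := by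
      intro r
      have h1 : Q * (x * (P * r)) = (Q * x * P) * r := by simp only [mul_assoc]
      rw [h1, key, smul_mul_assoc]
      simp only [mul_assoc]
    -- e(2n+3) commutes with f
    have hcomm3f : e (2 * n + 3) * f = f * e (2 * n + 3) := by
      refine hecomm (2 * n + 3) (by omega) f ?_
      have h : 2 * n + 3 - 1 = 2 * n + 2 := by omega
      rw [h]
      exact hfmem
    have hswap3 : ∀ r : A, e (2 * n + 3) * (f * r) = f * (e (2 * n + 3) * r) := by
      intro r
      rw [← mul_assoc, hcomm3f, mul_assoc]
    -- the sandwich at level 2n+3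
    have hg : y * e (2 * n + 2) ∈ Mt (2 * n + 3) :=
      mul_mem (hmono (by omega) hymem) (hemem (2 * n + 2) (by omega))
    have hmem23 : y ∈ Mt (2 * n + 3 - 1) := by
      have h : 2 * n + 3 - 1 = 2 * n + 2 := by omega
      rw [h]
      exact hmono (by omega) hymem
    have hsand2 : ∀ r : A, e (2 * n + 3) * (y * (e (2 * n + 2) * (e (2 * n + 3) * r)))
        = (τ : ℂ) • (y * (e (2 * n + 3) * r)) := by
      intro r
      have h1 : e (2 * n + 3) * (y * (e (2 * n + 2) * (e (2 * n + 3) * r)))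
          = (e (2 * n + 3) * (y * e (2 * n + 2)) * e (2 * n + 3)) * r := by
        simp only [mul_assoc]
      rw [h1, hjones (2 * n + 3) (by omega) _ hg]
      have h2 : EE (2 * n + 3) (y * e (2 * n + 2))
          = y * EE (2 * n + 3) (e (2 * n + 2)) := by
        have h := hEEbim (2 * n + 3) (by omega) y hmem23 1 (one_mem _) (e (2 * n + 2))
        simpa using h
      have h3 : EE (2 * n + 3) (e (2 * n + 2)) * e (2 * n + 3) = (τ : ℂ) • e (2 * n + 3) := by
        rw [← hjones (2 * n + 3) (by omega) (e (2 * n + 2)) (hemem (2 * n + 2) (by omega))]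
        exact hTL2 (2 * n + 2) (by omega)
      rw [h2]
      calc y * EE (2 * n + 3) (e (2 * n + 2)) * e (2 * n + 3) * r
          = y * (EE (2 * n + 3) (e (2 * n + 2)) * e (2 * n + 3)) * r := by
            simp only [mul_assoc]
        _ = y * ((τ : ℂ) • e (2 * n + 3)) * r := by rw [h3]
        _ = (τ : ℂ) • (y * (e (2 * n + 3) * r)) := by
            simp only [mul_smul_comm, smul_mul_assoc, mul_assoc]
    -- inductive hypothesis in applied form
    have hih : ∀ r : A, f * (y * (f * r)) = ENc y * (f * r) := by
      intro r
      have h1 : f * (y * (f * r)) = (f * y * f) * r := by simp only [mul_assoc]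
      rw [h1, ih y hymem]
      simp only [mul_assoc]
    have hEy : ENc y = ENc x := by
      rw [hydef]
      exact hENccomp (n + 2) (by omega) x
    -- ENc x commutes with the ascending run
    have hPmcomm : ((List.range (n + 1)).map (fun t => e (n + 2 + t))).prod * ENc x
        = ENc x * ((List.range (n + 1)).map (fun t => e (n + 2 + t))).prod := by
      apply listprod_comm
      intro z hz
      simp only [List.mem_map, List.mem_range] at hz
      obtain ⟨t, ht, rfl⟩ := hz
      exact hecomm _ (by omega) (ENc x) (hmono (by omega) (hENcmem x))
    have hPmcomm' : ∀ r : A,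
        ((List.range (n + 1)).map (fun t => e (n + 2 + t))).prod * (ENc x * r)
        = ENc x * (((List.range (n + 1)).map (fun t => e (n + 2 + t))).prod * r) := by
      intro r
      rw [← mul_assoc, hPmcomm, mul_assoc]
    -- the main identity
    have main : P * (f * (Q * (x * (P * (f * Q)))))
        = (τ : ℂ) ^ (n + 1) • (ENc x * (P * (f * Q))) := by
      calc P * (f * (Q * (x * (P * (f * Q)))))
          = P * (f * ((τ : ℂ) ^ n • (y * (e (2 * n + 2) * (e (2 * n + 3) * (f * Q)))))) := by
            rw [key' (f * Q)]
        _ = (τ : ℂ) ^ n • (P * (f * (y * (e (2 * n + 2) * (e (2 * n + 3) * (f * Q)))))) := by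
            simp only [mul_smul_comm]
        _ = (τ : ℂ) ^ n • (((List.range (n + 1)).map (fun t => e (n + 2 + t))).prod *
              (e (2 * n + 3) * (f * (y * (e (2 * n + 2) * (e (2 * n + 3) * (f * Q))))))) := by
            rw [hPsplit1]; simp only [mul_assoc]
        _ = (τ : ℂ) ^ n • (((List.range (n + 1)).map (fun t => e (n + 2 + t))).prod *
              (f * (e (2 * n + 3) * (y * (e (2 * n + 2) * (e (2 * n + 3) * (f * Q))))))) := by
            rw [hswap3]
        _ = (τ : ℂ) ^ n • (((List.range (n + 1)).map (fun t => e (n + 2 + t))).prod *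
              (f * ((τ : ℂ) • (y * (e (2 * n + 3) * (f * Q)))))) := by
            rw [hsand2]
        _ = ((τ : ℂ) ^ n * (τ : ℂ)) •
              (((List.range (n + 1)).map (fun t => e (n + 2 + t))).prod *
              (f * (y * (e (2 * n + 3) * (f * Q))))) := by
            simp only [mul_smul_comm, smul_smul]
        _ = ((τ : ℂ) ^ n * (τ : ℂ)) •
              (((List.range (n + 1)).map (fun t => e (n + 2 + t))).prod *
              (f * (y * (f * (e (2 * n + 3) * Q))))) := by
            rw [hswap3]
        _ = ((τ : ℂ) ^ n * (τ : ℂ)) •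
              (((List.range (n + 1)).map (fun t => e (n + 2 + t))).prod *
              (ENc y * (f * (e (2 * n + 3) * Q)))) := by
            rw [hih]
        _ = ((τ : ℂ) ^ n * (τ : ℂ)) •
              (ENc x * (((List.range (n + 1)).map (fun t => e (n + 2 + t))).prod *
              (f * (e (2 * n + 3) * Q)))) := by
            rw [hEy, hPmcomm']
        _ = ((τ : ℂ) ^ n * (τ : ℂ)) •
              (ENc x * (((List.range (n + 1)).map (fun t => e (n + 2 + t))).prod *
              (e (2 * n + 3) * (f * Q)))) := by
            rw [← hswap3]
        _ = (τ : ℂ) ^ (n + 1) • (ENc x * (P * (f * Q))) := by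
            rw [hPsplit1, ← pow_succ]
            simp only [mul_assoc]
    -- final assembly
    have hpow : ((τ : ℂ) ^ (n + 1)) ≠ 0 := pow_ne_zero _ hτc
    have hsc : (((τ : ℂ) ^ (n + 1))⁻¹ * ((τ : ℂ) ^ (n + 1))⁻¹) * (τ : ℂ) ^ (n + 1)
        = ((τ : ℂ) ^ (n + 1))⁻¹ := by
      field_simp
    calc (((τ : ℂ) ^ (n + 1))⁻¹ • (P * f * Q)) * x * (((τ : ℂ) ^ (n + 1))⁻¹ • (P * f * Q))
        = (((τ : ℂ) ^ (n + 1))⁻¹ * ((τ : ℂ) ^ (n + 1))⁻¹) •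
            (P * (f * (Q * (x * (P * (f * Q)))))) := by
          simp only [smul_mul_assoc, mul_smul_comm, smul_smul, mul_assoc]
      _ = (((τ : ℂ) ^ (n + 1))⁻¹ * ((τ : ℂ) ^ (n + 1))⁻¹) •
            ((τ : ℂ) ^ (n + 1) • (ENc x * (P * (f * Q)))) := by rw [main]
      _ = ENc x * (((τ : ℂ) ^ (n + 1))⁻¹ • (P * f * Q)) := by
          rw [smul_smul, hsc, mul_smul_comm]
          simp only [mul_assoc]
end

section
/- With {λᵢ} a basis for M/N and λ_{î(k)} the induced basis elements of M_{k−1}/N, one has Σ_{î(k) ∈ I^k} λ*_{î(k)} e_{[−1,k−1]} λ_{î(k)} = 1 for all k ≥ 1. -/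
/- STATEMENT 17: With {λᵢ} a basis for M/N and λ_{î(k)} the induced basis elements of
M_{k−1}/N, one has Σ_{î(k) ∈ I^k} λ*_{î(k)} e_{[−1,k−1]} λ_{î(k)} = 1 for all k ≥ 1.

Here λ_{î(k)} = τ^{−k(k−1)/4} λ_{i₁} e₁ λ_{i₂} (e₂e₁) λ_{i₃} ⋯ (e_{k−1}⋯e₁) λ_{i_k},
and e_{[−1,k−1]} is the projection implementing E_N : M_{k−1} → N, defined recursively
by e_{[−1,0]} = e₁ and e_{[−1,n+1]} = τ^{−(n+1)}(e_{n+2}⋯e_{2n+3}) e_{[−1,n]}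
(e_{2n+2}⋯e_{n+2}).  Tower convention: Mt 0 = N, Mt 1 = M, Mt (j+1) = Mⱼ. -/

/-- the descending product e_j e_{j-1} ⋯ e_1 (empty for j = 0) -/
noncomputable def descp {A : Type*} [Ring A] (e : ℕ → A) (j : ℕ) : A :=
  ((List.range j).reverse.map (fun t => e (t + 1))).prod

/-- λ_{î(k)} = τ^{-k(k-1)/4} λ_{i₁} e₁ λ_{i₂} (e₂e₁) λ_{i₃} ⋯ (e_{k-1}⋯e₁) λ_{i_k} -/
noncomputable def lamhat {A : Type*} [Ring A] [Algebra ℂ A] (τ : ℝ) (e : ℕ → A)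
    {nI : ℕ} (l : Fin nI → A) (k : ℕ) (ii : Fin k → Fin nI) : A :=
  ((((Real.sqrt τ) ^ (k * (k - 1) / 2))⁻¹ : ℝ) : ℂ) •
    ((List.finRange k).map (fun j => descp e j.val * l (ii j))).prod

/-! Induction on `k`. Splitting off the last index,
`λ_{î(k+1)} = τ^{-k/2} λ_{î(k)} (e_k ⋯ e_1) λ_{i_{k+1}}`, while the recursion for `e_{[−1,k]}`
surrounds `e_{[−1,k−1]}` by words in the `e_j` with `j ≥ k + 1`, which commute with
`λ_{î(k)} ∈ M_{k−1}`. Summing over the first `k` indices and using the induction hypothesis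
leaves `Σᵢ τ^{-2k} λᵢ* (e_1 ⋯ e_{2k+1})(e_{2k} ⋯ e_1) λᵢ`; the Temperley–Lieb relation
`e_j e_{j+1} e_j = τ e_j` collapses the middle word to `τ^{2k} e_1`, and `Σᵢ λᵢ* e_1 λᵢ = 1`. -/

section TLProducts

variable {M : Type*} [Monoid M] (e : ℕ → M)

noncomputable def ascProd (a m : ℕ) : M :=
  ((List.range m).map fun t => e (a + t)).prod

noncomputable def descProd (a m : ℕ) : M :=
  ((List.range m).reverse.map fun t => e (a + t)).prod

@[simp] lemma ascProd_zero (a : ℕ) : ascProd e a 0 = 1 := rfl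

@[simp] lemma descProd_zero (a : ℕ) : descProd e a 0 = 1 := rfl

lemma ascProd_succ (a m : ℕ) : ascProd e a (m + 1) = ascProd e a m * e (a + m) := by
  simp [ascProd, List.range_succ]

lemma descProd_succ (a m : ℕ) : descProd e a (m + 1) = e (a + m) * descProd e a m := by
  simp [descProd, List.range_succ]

lemma ascProd_add (a m p : ℕ) : ascProd e a (m + p) = ascProd e a m * ascProd e (a + m) p := by
  induction p with
  | zero => simp
  | succ p ih => rw [← add_assoc, ascProd_succ, ih, ascProd_succ, mul_assoc, add_assoc]

lemma descProd_add (a m p : ℕ) :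
    descProd e a (m + p) = descProd e (a + m) p * descProd e a m := by
  induction p with
  | zero => simp
  | succ p ih => rw [← add_assoc, descProd_succ, ih, descProd_succ, mul_assoc, add_assoc]

lemma descProd_eq_prod_map_range (a m : ℕ) :
    descProd e a m = ((List.range m).map fun t => e (a + m - 1 - t)).prod := by
  rw [descProd, List.range_eq_range', List.reverse_range', List.map_map, ← List.range_eq_range']
  congr 1
  refine List.map_congr_left fun t ht => ?_
  rw [List.mem_range] at ht
  simp only [Function.comp_apply]
  congr 1
  omega

variable {e}

lemma commute_ascProd {x : M} {a : ℕ} (h : ∀ j, a ≤ j → Commute x (e j)) (m : ℕ) :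
    Commute x (ascProd e a m) :=
  Commute.list_prod_right _ _ fun y hy => by
    obtain ⟨t, -, rfl⟩ := List.mem_map.1 hy
    exact h _ (Nat.le_add_right a t)

lemma commute_descProd {x : M} {a : ℕ} (h : ∀ j, a ≤ j → Commute x (e j)) (m : ℕ) :
    Commute x (descProd e a m) :=
  Commute.list_prod_right _ _ fun y hy => by
    obtain ⟨t, -, rfl⟩ := List.mem_map.1 hy
    exact h _ (Nat.le_add_right a t)

lemma star_descProd [StarMul M] {a : ℕ} (h : ∀ j, a ≤ j → star (e j) = e j) (m : ℕ) :
    star (descProd e a m) = ascProd e a m := by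
  induction m with
  | zero => simp
  | succ m ih => rw [descProd_succ, star_mul, ih, h _ (Nat.le_add_right a m), ascProd_succ]

end TLProducts

lemma ascProd_succ_mul_descProd {R A : Type*} [CommSemiring R] [Semiring A] [Algebra R A]
    {e : ℕ → A} {τ : R} {a : ℕ} (h : ∀ j, a ≤ j → e j * e (j + 1) * e j = τ • e j) (m : ℕ) :
    ascProd e a (m + 1) * descProd e a m = τ ^ m • e a := by
  induction m with
  | zero => simp [ascProd_succ]
  | succ m ih =>
    calc ascProd e a (m + 2) * descProd e a (m + 1)
        = ascProd e a m * (e (a + m) * e (a + m + 1) * e (a + m)) * descProd e a m := by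
          simp only [ascProd_succ, descProd_succ, add_assoc, mul_assoc]
      _ = τ • (ascProd e a (m + 1) * descProd e a m) := by
          rw [h _ (Nat.le_add_right a m), ascProd_succ, mul_smul_comm, smul_mul_assoc]
      _ = τ ^ (m + 1) • e a := by rw [ih, smul_smul, pow_succ']

lemma ascProd_mul_descProd_conj {R A : Type*} [CommSemiring R] [Semiring A] [Algebra R A]
    {e : ℕ → A} {τ : R} {a : ℕ} (h : ∀ j, a ≤ j → e j * e (j + 1) * e j = τ • e j) (m : ℕ) :
    ascProd e a m * (ascProd e (a + m) (m + 1) * descProd e (a + m) m) * descProd e a m =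
      τ ^ (2 * m) • e a := by
  rw [← ascProd_succ_mul_descProd h, show 2 * m + 1 = m + (m + 1) by omega, two_mul,
    ascProd_add e a m (m + 1), descProd_add e a m m]
  simp only [mul_assoc]

section Lamhat

lemma descp_eq_descProd {A : Type*} [Ring A] (e : ℕ → A) (j : ℕ) : descp e j = descProd e 1 j := by
  simp [descp, descProd, add_comm]

variable {A : Type*} [Ring A] [Algebra ℂ A] {e : ℕ → A}

lemma ebr_succ (τ : ℂ) (n : ℕ) :
    ebr τ e (n + 1) =
      (τ ^ (n + 1))⁻¹ • (ascProd e (n + 2) (n + 2) * ebr τ e n * descProd e (n + 2) (n + 1)) := by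
  rw [ebr, descProd_eq_prod_map_range]
  congr 5
  funext t
  congr 1
  omega

variable {nI : ℕ} (τ : ℝ) (l : Fin nI → A)

lemma lamhat_one (ii : Fin 1 → Fin nI) : lamhat τ e l 1 ii = l (ii 0) := by
  simp [lamhat, descp, List.finRange_succ]

lemma lamhat_snoc (k : ℕ) (f : Fin k → Fin nI) (a : Fin nI) :
    lamhat τ e l (k + 1) (Fin.snoc f a) =
      (((Real.sqrt τ ^ k)⁻¹ : ℝ) : ℂ) • (lamhat τ e l k f * (descProd e 1 k * l a)) := by
  have hexp : (k + 1) * (k + 1 - 1) / 2 = k + k * (k - 1) / 2 := by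
    rw [Nat.triangle_succ, add_comm]
  simp only [lamhat, List.finRange_succ_last, List.map_append, List.prod_append, List.map_map,
    Function.comp_def, Fin.snoc_castSucc, Fin.val_castSucc, List.map_cons, List.map_nil,
    List.prod_cons, List.prod_nil, mul_one, Fin.snoc_last, Fin.val_last, descp_eq_descProd,
    smul_mul_assoc, smul_smul, hexp, pow_add, mul_inv, Complex.ofReal_mul]

end Lamhat

section Conjugation

variable {A : Type*} [Ring A] [StarRing A] [Algebra ℂ A] [StarModule ℂ A]
  {Mt : ℕ → StarSubalgebra ℂ A} {e : ℕ → A} {nI : ℕ} {l : Fin nI → A} {τ : ℝ}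

lemma lamhat_mem (hmono : Monotone Mt) (hemem : ∀ j, 1 ≤ j → e j ∈ Mt (j + 1))
    (hl : ∀ i, l i ∈ Mt 1) {k : ℕ} (ii : Fin k → Fin nI) : lamhat τ e l k ii ∈ Mt k := by
  refine SMulMemClass.smul_mem _ (list_prod_mem fun y hy => ?_)
  obtain ⟨j, -, rfl⟩ := List.mem_map.1 hy
  have hj := j.isLt
  refine mul_mem (list_prod_mem fun z hz => ?_) (hmono (by omega) (hl _))
  obtain ⟨t, ht, rfl⟩ := List.mem_map.1 hz
  rw [List.mem_reverse, List.mem_range] at ht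
  exact hmono (by omega) (hemem (t + 1) (by omega))

lemma conj_lamhat_snoc (hτ : 0 < τ) (hmono : Monotone Mt)
    (hemem : ∀ j, 1 ≤ j → e j ∈ Mt (j + 1)) (hestar : ∀ j, 1 ≤ j → star (e j) = e j)
    (hecomm : ∀ j, 1 ≤ j → ∀ x ∈ Mt (j - 1), e j * x = x * e j) (hl : ∀ i, l i ∈ Mt 1)
    (k : ℕ) (f : Fin (k + 1) → Fin nI) (a : Fin nI) :
    star (lamhat τ e l (k + 1 + 1) (Fin.snoc f a)) * ebr (τ : ℂ) e (k + 1) *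
        lamhat τ e l (k + 1 + 1) (Fin.snoc f a) =
      ((τ : ℂ) ^ (2 * (k + 1)))⁻¹ • (star (l a) * (ascProd e 1 (k + 1) *
        (ascProd e (k + 2) (k + 2) *
          (star (lamhat τ e l (k + 1) f) * ebr (τ : ℂ) e k * lamhat τ e l (k + 1) f) *
          descProd e (k + 2) (k + 1)) * descProd e 1 (k + 1)) * l a) := by
  have hcomm : ∀ y ∈ Mt (k + 1), ∀ j, k + 2 ≤ j → Commute y (e j) := fun y hy j hj =>
    (hecomm j (by omega) y (hmono (by omega) hy)).symm
  have hx := lamhat_mem (τ := τ) hmono hemem hl f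
  have hc : star ((((Real.sqrt τ ^ (k + 1))⁻¹ : ℝ) : ℂ)) = (((Real.sqrt τ ^ (k + 1))⁻¹ : ℝ) : ℂ) :=
    Complex.conj_ofReal _
  have hsqrt : (Real.sqrt τ : ℂ) ^ 2 = τ := by exact_mod_cast Real.sq_sqrt hτ.le
  rw [lamhat_snoc, ebr_succ, star_smul, hc, star_mul, star_mul, star_descProd hestar]
  generalize lamhat τ e l (k + 1) f = x at hx ⊢
  simp only [smul_mul_assoc, mul_smul_comm, smul_smul]
  congr 1
  · push_cast
    field_simp
    rw [← pow_mul, mul_comm (k + 1), pow_mul, hsqrt, ← pow_add]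
    ring_nf
  · have hP := commute_ascProd (hcomm _ (star_mem hx)) (k + 2)
    have hQ := commute_descProd (hcomm _ hx) (k + 1)
    calc _ = star (l a) * ascProd e 1 (k + 1) * (star x * ascProd e (k + 2) (k + 2)) *
          ebr (τ : ℂ) e k * (descProd e (k + 2) (k + 1) * x) * (descProd e 1 (k + 1) * l a) := by
          simp only [mul_assoc]
      _ = _ := by
          rw [hP.eq, ← hQ.eq]
          simp only [mul_assoc]

lemma sum_conj_lamhat_succ (hτ : 0 < τ) (hmono : Monotone Mt)
    (hemem : ∀ j, 1 ≤ j → e j ∈ Mt (j + 1)) (hestar : ∀ j, 1 ≤ j → star (e j) = e j)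
    (hecomm : ∀ j, 1 ≤ j → ∀ x ∈ Mt (j - 1), e j * x = x * e j) (hl : ∀ i, l i ∈ Mt 1)
    (k : ℕ) :
    ∑ ii : Fin (k + 1 + 1) → Fin nI,
        star (lamhat τ e l (k + 1 + 1) ii) * ebr (τ : ℂ) e (k + 1) * lamhat τ e l (k + 1 + 1) ii =
      ((τ : ℂ) ^ (2 * (k + 1)))⁻¹ • ∑ a, star (l a) * (ascProd e 1 (k + 1) *
        (ascProd e (k + 2) (k + 2) *
          (∑ f : Fin (k + 1) → Fin nI,
            star (lamhat τ e l (k + 1) f) * ebr (τ : ℂ) e k * lamhat τ e l (k + 1) f) *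
          descProd e (k + 2) (k + 1)) * descProd e 1 (k + 1)) * l a := by
  rw [← (Fin.snocEquiv fun _ => Fin nI).sum_comp, Fintype.sum_prod_type, Finset.smul_sum]
  refine Finset.sum_congr rfl fun a _ => ?_
  simp only [Finset.mul_sum, Finset.sum_mul, Finset.smul_sum]
  exact Finset.sum_congr rfl fun f _ => conj_lamhat_snoc hτ hmono hemem hestar hecomm hl k f a

end Conjugation

theorem stmt17_general {A : Type*} [Ring A] [StarRing A] [Algebra ℂ A] [StarModule ℂ A]
    (Mt : ℕ → StarSubalgebra ℂ A) (hmono : Monotone Mt)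
    (e : ℕ → A) (τ : ℝ) (hτ : 0 < τ)
    (hemem : ∀ j, 1 ≤ j → e j ∈ Mt (j + 1))
    (hestar : ∀ j, 1 ≤ j → star (e j) = e j)
    (hTL1 : ∀ j, 1 ≤ j → e j * e (j + 1) * e j = (τ : ℂ) • e j)
    (hecomm : ∀ j, 1 ≤ j → ∀ x ∈ Mt (j - 1), e j * x = x * e j)
    (nI : ℕ) (l : Fin nI → A) (hl : ∀ i, l i ∈ Mt 1)
    (hbasis : ∑ i, star (l i) * e 1 * l i = 1) :
    ∀ k : ℕ, 1 ≤ k →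
      ∑ ii : Fin k → Fin nI,
        star (lamhat τ e l k ii) * ebr (τ : ℂ) e (k - 1) * lamhat τ e l k ii = 1 := by
  intro k hk
  obtain ⟨m, rfl⟩ : ∃ m, k = m + 1 := ⟨k - 1, by omega⟩
  clear hk
  rw [Nat.add_sub_cancel]
  induction m with
  | zero =>
    change ∑ ii : Fin 1 → Fin nI, star (lamhat τ e l 1 ii) * e 1 * lamhat τ e l 1 ii = 1
    simp only [lamhat_one]
    rw [← hbasis]
    exact Fintype.sum_equiv (Equiv.funUnique (Fin 1) (Fin nI)) _ _ fun _ => rfl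
  | succ m ih =>
    have hTL := ascProd_mul_descProd_conj hTL1 (m + 1)
    rw [show 1 + (m + 1) = m + 2 by omega] at hTL
    have hτ' : (τ : ℂ) ^ (2 * (m + 1)) ≠ 0 := pow_ne_zero _ (by exact_mod_cast hτ.ne')
    simp only [sum_conj_lamhat_succ hτ hmono hemem hestar hecomm hl, ih, mul_one, hTL,
      mul_smul_comm, smul_mul_assoc, ← Finset.smul_sum, smul_smul, inv_mul_cancel₀ hτ', one_smul,
      hbasis]

theorem stmt17 {A : Type*} [Ring A] [StarRing A] [Algebra ℂ A] [StarModule ℂ A]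
    (Mt : ℕ → StarSubalgebra ℂ A) (hmono : Monotone Mt)
    (e : ℕ → A) (τ : ℝ) (hτ : 0 < τ)
    (hemem : ∀ j, 1 ≤ j → e j ∈ Mt (j + 1))
    (heproj : ∀ j, 1 ≤ j → e j * e j = e j)
    (hestar : ∀ j, 1 ≤ j → star (e j) = e j)
    (hTL1 : ∀ j, 1 ≤ j → e j * e (j + 1) * e j = (τ : ℂ) • e j)
    (hTL2 : ∀ j, 1 ≤ j → e (j + 1) * e j * e (j + 1) = (τ : ℂ) • e (j + 1))
    (hTLc : ∀ i j, 1 ≤ i → i + 2 ≤ j → e i * e j = e j * e i)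
    (EE : ℕ → (A →ₗ[ℂ] A))
    (hEEmem : ∀ j, 1 ≤ j → ∀ x : A, EE j x ∈ Mt (j - 1))
    (hEEfix : ∀ j, 1 ≤ j → ∀ x ∈ Mt (j - 1), EE j x = x)
    (hjones : ∀ j, 1 ≤ j → ∀ x ∈ Mt j, e j * x * e j = EE j x * e j)
    (hecomm : ∀ j, 1 ≤ j → ∀ x ∈ Mt (j - 1), e j * x = x * e j)
    (nI : ℕ) (l : Fin nI → A) (hl : ∀ i, l i ∈ Mt 1)
    (hbasis : ∑ i, star (l i) * e 1 * l i = 1) :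
    ∀ k : ℕ, 1 ≤ k →
      ∑ ii : Fin k → Fin nI,
        star (lamhat τ e l k ii) * ebr (τ : ℂ) e (k - 1) * lamhat τ e l k ii = 1 :=
  stmt17_general Mt hmono e τ hτ hemem hestar hTL1 hecomm nI l hl hbasis
end
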